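/- arXiv:1301.3244 — 4 statements merged into one kernel-verified Lean document; each statement's English description precedes it below -/
import Mathlib

section
/- Let M be a topological space and φ : ℝ → M → M a 2π-periodic flow on M. Let f : M → ℝ be such that for every p ∈ M the map t ↦ f (φ t p) is continuous. Then for every p ∈ M the map s ↦ S(f)(φ s p) is differentiable at s = 0 with derivative f(p) − ⟨f⟩(p), where S(f)(p) = (1/(2π)) ∫₀^{2π} (t − π) f (φ t p) dt and ⟨f⟩(p) = (1/(2π)) ∫₀^{2π} f (φ t p) dt. (In Lie-derivative notation: L_Υ ∘ S applied to f equals f − ⟨f⟩, where Υ is the generator of the S¹-action.) -/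
open Real

/-! Writing `g t = f (φ t p)`, the flow property turns `S(f)(φ s p)` into
`(1/2π) ∫₀^{2π} (t - π) g (t + s) dt`. Substituting `u = t + s` moves `s` into the limits of
integration, where the fundamental theorem of calculus applies to the continuous (but not
necessarily differentiable) `g`; periodicity makes the boundary terms collapse to `2π g(s)`
and the mean of `g` over a shifted period equal to `⟨f⟩(p)`. -/

namespace Function.Periodic

variable {g : ℝ → ℝ} {T : ℝ}

theorem integral_mul_comp_add_eq (hg : Continuous g) (hper : Periodic g T) (c s : ℝ) :
    ∫ t in (0:ℝ)..T, (t - c) * g (t + s) =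
      (∫ u in (0:ℝ)..(s + T), (u - c) * g u) - (∫ u in (0:ℝ)..s, (u - c) * g u)
        - s * ∫ t in (0:ℝ)..T, g t := by
  have hmul : Continuous fun u => (u - c) * g u := by fun_prop
  calc ∫ t in (0:ℝ)..T, (t - c) * g (t + s)
      = ∫ t in (0:ℝ)..T, ((t + s - c) * g (t + s) - s * g (t + s)) :=
        intervalIntegral.integral_congr fun t _ => by ring
    _ = ∫ u in s..(s + T), ((u - c) * g u - s * g u) := by
        rw [intervalIntegral.integral_comp_add_right (fun u => (u - c) * g u - s * g u),
          zero_add, add_comm T]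
    _ = (∫ u in s..(s + T), (u - c) * g u) - s * ∫ u in s..(s + T), g u := by
        rw [intervalIntegral.integral_sub (hmul.intervalIntegrable _ _)
            ((show Continuous fun u => s * g u by fun_prop).intervalIntegrable _ _),
          intervalIntegral.integral_const_mul]
    _ = _ := by
        rw [intervalIntegral.integral_interval_sub_left (hmul.intervalIntegrable _ _)
            (hmul.intervalIntegrable _ _), hper.intervalIntegral_add_eq s 0, zero_add]

theorem hasDerivAt_integral_mul_comp_add (hg : Continuous g) (hper : Periodic g T)
    (c s : ℝ) :
    HasDerivAt (fun s => ∫ t in (0:ℝ)..T, (t - c) * g (t + s))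
      (T * g s - ∫ t in (0:ℝ)..T, g t) s := by
  have hmul : Continuous fun u => (u - c) * g u := by fun_prop
  have hprim : ∀ x, HasDerivAt (fun x => ∫ u in (0:ℝ)..x, (u - c) * g u) ((x - c) * g x) x :=
    fun x => intervalIntegral.integral_hasDerivAt_right (hmul.intervalIntegrable _ _)
      (hmul.stronglyMeasurableAtFilter _ _) hmul.continuousAt
  rw [funext (integral_mul_comp_add_eq hg hper c)]
  refine ((((hprim (s + T)).comp_add_const s T).sub (hprim s)).sub
    (hasDerivAt_mul_const _)).congr_deriv ?_
  rw [hper s]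
  ring

end Function.Periodic

theorem hasDerivAt_S_operator_general
    {M : Type*} (φ : ℝ → M → M)
    (h0 : ∀ p : M, φ 0 p = p)
    (hadd : ∀ s t : ℝ, ∀ p : M, φ (s + t) p = φ s (φ t p))
    (hper : ∀ t : ℝ, ∀ p : M, φ (t + 2 * π) p = φ t p)
    (f : M → ℝ) (hf : ∀ p : M, Continuous fun t : ℝ => f (φ t p))
    (p : M) :
    HasDerivAt
      (fun s : ℝ => (1 / (2 * π)) * ∫ t in (0:ℝ)..(2 * π), (t - π) * f (φ t (φ s p)))
      (f p - (1 / (2 * π)) * ∫ t in (0:ℝ)..(2 * π), f (φ t p)) 0 := by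
  have hperiodic : Function.Periodic (fun t => f (φ t p)) (2 * π) := fun t => by
    simp only [hper]
  have hderiv := (hperiodic.hasDerivAt_integral_mul_comp_add (hf p) π 0).const_mul (1 / (2 * π))
  simp only [← hadd]
  refine hderiv.congr_deriv ?_
  rw [h0]
  field_simp

/-- `L_Υ ∘ S = id − ⟨·⟩`: the derivative at `s = 0` of `s ↦ S(f)(φ s p)` equals
`f p − ⟨f⟩ p` for a 2π-periodic flow. -/
theorem hasDerivAt_S_operator
    {M : Type*} [TopologicalSpace M] (φ : ℝ → M → M)
    (h0 : ∀ p : M, φ 0 p = p)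
    (hadd : ∀ s t : ℝ, ∀ p : M, φ (s + t) p = φ s (φ t p))
    (hper : ∀ t : ℝ, ∀ p : M, φ (t + 2 * π) p = φ t p)
    (f : M → ℝ) (hf : ∀ p : M, Continuous fun t : ℝ => f (φ t p))
    (p : M) :
    HasDerivAt
      (fun s : ℝ => (1 / (2 * π)) * ∫ t in (0:ℝ)..(2 * π), (t - π) * f (φ t (φ s p)))
      (f p - (1 / (2 * π)) * ∫ t in (0:ℝ)..(2 * π), f (φ t p)) 0 :=
  hasDerivAt_S_operator_general φ h0 hadd hper f hf p
end

section
/- Period–energy relation on canonical phase space: let H : ℝⁿ × ℝⁿ → ℝ be smooth with canonical Hamiltonian vector field X_H(q,p) = (∂H/∂p (q,p), −∂H/∂q (q,p)), and suppose X_H is complete with flow φ : ℝ → ℝⁿ×ℝⁿ → ℝⁿ×ℝⁿ which is periodic with smooth period function T > 0, i.e. φ (t + T(x)) x = φ t x for all t ∈ ℝ, x ∈ ℝⁿ×ℝⁿ; set ω = 2π/T. Then dω ∧ dH = 0: at every point x the differentials of ω and H are linearly dependent, i.e. there exist (a, b) ≠ (0, 0) with a·Dω(x) + b·DH(x) = 0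 (equivalently, the vectors X_ω(x) and X_H(x) are parallel). -/
open Real Set Filter Metric Topology

noncomputable section

variable {n : ℕ}

def peOmL (n : ℕ) : ((Fin n → ℝ) × (Fin n → ℝ)) →ₗ[ℝ] ((Fin n → ℝ) × (Fin n → ℝ)) →ₗ[ℝ] ℝ :=
  LinearMap.mk₂ ℝ (fun a c => ∑ i, (a.1 i * c.2 i - a.2 i * c.1 i))
    (fun a b c => by
      rw [← Finset.sum_add_distrib]
      exact Finset.sum_congr rfl fun i _ => by simp; ring)
    (fun r a c => by
      simp only [smul_eq_mul, Finset.mul_sum]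
      exact Finset.sum_congr rfl fun i _ => by simp; ring)
    (fun a b c => by
      rw [← Finset.sum_add_distrib]
      exact Finset.sum_congr rfl fun i _ => by simp; ring)
    (fun r a c => by
      simp only [smul_eq_mul, Finset.mul_sum]
      exact Finset.sum_congr rfl fun i _ => by simp; ring)

def peOm (n : ℕ) : ((Fin n → ℝ) × (Fin n → ℝ)) →L[ℝ] ((Fin n → ℝ) × (Fin n → ℝ)) →L[ℝ] ℝ :=
  LinearMap.toContinuousLinearMap <|
    ((LinearMap.toContinuousLinearMap :
        (((Fin n → ℝ) × (Fin n → ℝ)) →ₗ[ℝ] ℝ) ≃ₗ[ℝ]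
          (((Fin n → ℝ) × (Fin n → ℝ)) →L[ℝ] ℝ)).toLinearMap).comp (peOmL n)

lemma peOm_apply (a c : (Fin n → ℝ) × (Fin n → ℝ)) :
    peOm n a c = ∑ i, (a.1 i * c.2 i - a.2 i * c.1 i) := rfl

lemma peOm_skew (a c : (Fin n → ℝ) × (Fin n → ℝ)) : peOm n a c = - peOm n c a := by
  rw [peOm_apply, peOm_apply, ← Finset.sum_neg_distrib]
  exact Finset.sum_congr rfl fun i _ => by ring

lemma peOm_self (a : (Fin n → ℝ) × (Fin n → ℝ)) : peOm n a a = 0 := by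
  have := peOm_skew a a; linarith

def peX (H : ((Fin n → ℝ) × (Fin n → ℝ)) → ℝ) (y : (Fin n → ℝ) × (Fin n → ℝ)) :
    (Fin n → ℝ) × (Fin n → ℝ) :=
  ((fun i => fderiv ℝ H y (0, Pi.single i 1)),
   (fun i => - fderiv ℝ H y (Pi.single i 1, 0)))

lemma peOm_X (H : ((Fin n → ℝ) × (Fin n → ℝ)) → ℝ) (y w : (Fin n → ℝ) × (Fin n → ℝ)) :
    peOm n (peX H y) w = fderiv ℝ H y w := by
  have hw : w = ∑ i, ((w.1 i) • ((Pi.single i 1 : Fin n → ℝ), (0 : Fin n → ℝ))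
      + (w.2 i) • ((0 : Fin n → ℝ), (Pi.single i 1 : Fin n → ℝ))) := by
    apply Prod.ext
    · simp only [Prod.fst_sum, Prod.fst_add, Prod.smul_fst, smul_zero, add_zero]
      funext j
      simp [Finset.sum_apply, Pi.single_apply]
    · simp only [Prod.snd_sum, Prod.snd_add, Prod.smul_snd, smul_zero, zero_add]
      funext j
      simp [Finset.sum_apply, Pi.single_apply]
  conv_rhs => rw [hw]
  rw [map_sum]
  rw [peOm_apply]
  refine Finset.sum_congr rfl fun i _ => ?_
  rw [map_add, map_smul, map_smul]
  simp [peX]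
  ring

-- Part 2 starts here

lemma peX_contDiff {H : ((Fin n → ℝ) × (Fin n → ℝ)) → ℝ} (hH : ContDiff ℝ (⊤ : ℕ∞) H) :
    ContDiff ℝ (⊤ : ℕ∞) (peX (n := n) H) := by
  have hf : ContDiff ℝ (⊤ : ℕ∞) (fderiv ℝ H) := hH.fderiv_right (by simp)
  refine ContDiff.prodMk ?_ ?_
  · exact contDiff_pi.2 fun i => hf.clm_apply contDiff_const
  · exact contDiff_pi.2 fun i => (hf.clm_apply contDiff_const).neg

lemma peOm_B {H : ((Fin n → ℝ) × (Fin n → ℝ)) → ℝ} (hH : ContDiff ℝ (⊤ : ℕ∞) H)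
    (y a c : (Fin n → ℝ) × (Fin n → ℝ)) :
    peOm n (fderiv ℝ (peX H) y a) c + peOm n a (fderiv ℝ (peX H) y c) = 0 := by
  have hHd : Differentiable ℝ H := hH.differentiable (by simp)
  have hf'd : Differentiable ℝ (fderiv ℝ H) := (hH.fderiv_right (m := (⊤ : ℕ∞)) (by simp)).differentiable (by simp)
  have hsymm : ∀ v w, fderiv ℝ (fderiv ℝ H) y v w = fderiv ℝ (fderiv ℝ H) y w v :=
    second_derivative_symmetric (fun z => (hHd z).hasFDerivAt) (hf'd y).hasFDerivAt
  have hX : Differentiable ℝ (peX H) := (peX_contDiff hH).differentiable (by simp)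
  have key : ∀ w c' : (Fin n → ℝ) × (Fin n → ℝ),
      peOm n (fderiv ℝ (peX H) y w) c' = fderiv ℝ (fderiv ℝ H) y w c' := by
    intro w c'
    have h1 : HasFDerivAt (peX H) (fderiv ℝ (peX H) y) y := (hX y).hasFDerivAt
    have hg1 : HasFDerivAt (fun z => peOm n (peX H z) c')
        (((peOm n).flip c').comp (fderiv ℝ (peX H) y)) y :=
      ((peOm n).flip c').hasFDerivAt.comp y h1
    have hg2 := (hf'd y).hasFDerivAt.clm_apply (hasFDerivAt_const c' y)
    have heq : (fun z => peOm n (peX H z) c') = fun z => fderiv ℝ H z c' := by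
      funext z; exact peOm_X H z c'
    rw [heq] at hg1
    have h3 := hg1.unique hg2
    have h4 := congrArg (fun (L : ((Fin n → ℝ) × (Fin n → ℝ)) →L[ℝ] ℝ) => L w) h3
    simpa using h4
  have h1 := key a c
  have h2 := key c a
  rw [peOm_skew a (fderiv ℝ (peX H) y c), h1, h2, hsymm a c]
  ring

/-- Grönwall bootstrap: a solution starting close to a reference solution whose
2-neighbourhood lies in a set where the field is Lipschitz stays exponentially close. -/
lemma peBootstrap {F : Type*} [NormedAddCommGroup F] [NormedSpace ℝ F]
    {W : F → F} {K : Set F} {L : NNReal}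
    (hW : LipschitzOnWith L W K) {c y : ℝ → F} {l : ℝ} (hl : 0 ≤ l)
    (hc : ∀ t, HasDerivAt c (W (c t)) t) (hy : ∀ t, HasDerivAt y (W (y t)) t)
    (htube : ∀ t ∈ Icc (0:ℝ) l, closedBall (c t) 2 ⊆ K)
    {δ : ℝ} (hδ0 : dist (y 0) (c 0) ≤ δ)
    (hsmall : δ * Real.exp (L * l) ≤ 1) :
    ∀ t ∈ Icc (0:ℝ) l, dist (y t) (c t) ≤ δ * Real.exp (L * t) := by
  have hcc : Continuous c := continuous_iff_continuousAt.2 fun t => (hc t).continuousAt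
  have hyc : Continuous y := continuous_iff_continuousAt.2 fun t => (hy t).continuousAt
  have hδnn : 0 ≤ δ := le_trans dist_nonneg hδ0
  have hLnn : (0:ℝ) ≤ (L:ℝ) := L.coe_nonneg
  have hδ1 : δ ≤ 1 := by
    have h1 : (1:ℝ) ≤ Real.exp (L * l) := Real.one_le_exp (by positivity)
    nlinarith
  have sub : ∀ t ∈ Icc (0:ℝ) l, (∀ σ ∈ Icc (0:ℝ) t, dist (y σ) (c σ) ≤ 2) →
      ∀ σ ∈ Icc (0:ℝ) t, dist (y σ) (c σ) ≤ δ * Real.exp (L * σ) := by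
    intro t ht hhist σ hσ
    have := dist_le_of_trajectories_ODE_of_mem (v := fun _ => W) (s := fun _ => K)
      (K := L) (f := y) (g := c) (a := 0) (b := t) (δ := δ)
      (fun _ _ => hW)
      hyc.continuousOn
      (fun τ _ => (hy τ).hasDerivWithinAt)
      (fun τ hτ => htube τ ⟨hτ.1, hτ.2.le.trans ht.2⟩
        (Metric.mem_closedBall.2 (hhist τ ⟨hτ.1, hτ.2.le⟩)))
      hcc.continuousOn
      (fun τ _ => (hc τ).hasDerivWithinAt)
      (fun τ hτ => htube τ ⟨hτ.1, hτ.2.le.trans ht.2⟩ (Metric.mem_closedBall_self (by norm_num)))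
      hδ0 σ hσ
    simpa using this
  set S : Set ℝ := {t : ℝ | 0 ≤ t ∧ ∀ σ ∈ Icc (0:ℝ) t, dist (y σ) (c σ) ≤ 2} with hS
  have hS0 : (0:ℝ) ∈ S := by
    refine ⟨le_refl 0, fun σ hσ => ?_⟩
    have hσ0 : σ = 0 := le_antisymm hσ.2 hσ.1
    rw [hσ0]
    linarith [hδ0]
  have hSclosed : IsClosed S := by
    apply IsSeqClosed.isClosed
    intro u t hu hut
    refine ⟨ge_of_tendsto hut (Eventually.of_forall fun k => (hu k).1), fun σ hσ => ?_⟩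
    have hmin : Tendsto (fun k => min σ (u k)) atTop (𝓝 (min σ t)) :=
      tendsto_const_nhds.min hut
    rw [min_eq_left hσ.2] at hmin
    have hbd : ∀ k, dist (y (min σ (u k))) (c (min σ (u k))) ≤ 2 := fun k =>
      (hu k).2 _ ⟨le_min hσ.1 (hu k).1, min_le_right _ _⟩
    have hcont : Tendsto (fun k => dist (y (min σ (u k))) (c (min σ (u k)))) atTop
        (𝓝 (dist (y σ) (c σ))) := ((hyc.dist hcc).continuousAt).tendsto.comp hmin
    exact le_of_tendsto hcont (Eventually.of_forall hbd)
  have hIcc : Icc (0:ℝ) l ⊆ S := by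
    apply IsClosed.Icc_subset_of_forall_exists_gt (hSclosed.inter isClosed_Icc) hS0
    intro t ht t' ht'
    have hd1 : dist (y t) (c t) ≤ 1 := by
      have h1 := sub t ⟨ht.2.1, ht.2.2.le⟩ ht.1.2 t ⟨ht.2.1, le_refl t⟩
      have h2 : δ * Real.exp (L * t) ≤ δ * Real.exp (L * l) := by
        apply mul_le_mul_of_nonneg_left _ hδnn
        exact Real.exp_le_exp.2 (mul_le_mul_of_nonneg_left ht.2.2.le hLnn)
      linarith
    have hopen : ∀ᶠ τ in 𝓝 t, dist (y τ) (c τ) < 2 :=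
      ((hyc.dist hcc).continuousAt).tendsto (Iio_mem_nhds (lt_of_le_of_lt hd1 one_lt_two))
    obtain ⟨ε, hε, hball⟩ := Metric.eventually_nhds_iff.1 hopen
    have htm : t < min t' (t + ε / 2) := lt_min ht' (by linarith)
    refine ⟨min t' (t + ε / 2), ⟨?_, ?_⟩, htm, min_le_left _ _⟩
    · exact le_trans ht.2.1 htm.le
    · intro σ hσ
      rcases le_or_gt σ t with h | h
      · exact ht.1.2 σ ⟨hσ.1, h⟩
      · have hσt : dist σ t < ε := by
          rw [Real.dist_eq, abs_of_pos (by linarith)]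
          have : σ ≤ t + ε / 2 := hσ.2.trans (min_le_right _ _)
          linarith
        exact (hball hσt).le
  intro t ht
  exact sub t ht ((hIcc ht).2) t ⟨ht.1, le_refl t⟩

set_option maxHeartbeats 2000000 in
/-- Period–energy relation on canonical phase space: if the Hamiltonian flow of a smooth
Hamiltonian `H` is periodic with smooth positive period function `T`, then
`dω ∧ dH = 0`, where `ω = 2π/T` is the frequency function. -/
theorem period_energy_relation
    {n : ℕ} (H : ((Fin n → ℝ) × (Fin n → ℝ)) → ℝ) (hH : ContDiff ℝ (⊤ : ℕ∞) H)
    (φ : ℝ → ((Fin n → ℝ) × (Fin n → ℝ)) → ((Fin n → ℝ) × (Fin n → ℝ)))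
    (hφ0 : ∀ x, φ 0 x = x)
    (hφadd : ∀ s t : ℝ, ∀ x, φ (s + t) x = φ s (φ t x))
    (hφflow : ∀ t : ℝ, ∀ x, HasDerivAt (fun τ : ℝ => φ τ x)
      ((fun i => fderiv ℝ H (φ t x) (0, Pi.single i 1)),
       (fun i => - fderiv ℝ H (φ t x) (Pi.single i 1, 0))) t)
    (T : ((Fin n → ℝ) × (Fin n → ℝ)) → ℝ) (hT : ContDiff ℝ (⊤ : ℕ∞) T)
    (hTpos : ∀ x, 0 < T x)
    (hper : ∀ t : ℝ, ∀ x, φ (t + T x) x = φ t x) :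
    ∀ x, ∃ a b : ℝ, (a, b) ≠ (0, 0) ∧
      a • fderiv ℝ (fun y => 2 * π / T y) x + b • fderiv ℝ H x = 0 := by
  intro x
  by_cases hDh : fderiv ℝ H x = 0
  · exact ⟨0, 1, by simp, by simp [hDh]⟩
  have hasDφ : ∀ (z : (Fin n → ℝ) × (Fin n → ℝ)) (t : ℝ),
      HasDerivAt (fun τ => φ τ z) (peX H (φ t z)) t := fun z t => hφflow t z
  have φcont : ∀ z, Continuous fun t => φ t z := fun z =>
    continuous_iff_continuousAt.2 fun t => (hasDφ z t).continuousAt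
  have hXc : ContDiff ℝ (⊤ : ℕ∞) (peX (n := n) H) := peX_contDiff hH
  have hXd : Differentiable ℝ (peX (n := n) H) := hXc.differentiable (by simp)
  have hXcont : Continuous (peX (n := n) H) := hXd.continuous
  have hBcd : ContDiff ℝ (⊤ : ℕ∞) (fderiv ℝ (peX (n := n) H)) := hXc.fderiv_right (by simp)
  have hBc : Continuous (fun y => fderiv ℝ (peX (n := n) H) y) := hBcd.continuous
  set b := T x with hbdef
  have hb : 0 < b := hTpos x
  have hφbx : φ b x = x := by
    have h1 := hper 0 x
    rw [zero_add] at h1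
    rw [h1, hφ0]
  -- compact tube around the orbit segment
  set Γ : Set ((Fin n → ℝ) × (Fin n → ℝ)) := (fun t => φ t x) '' Icc (-1) (b+1) with hΓ
  have hΓcomp : IsCompact Γ := isCompact_Icc.image (φcont x)
  obtain ⟨R, hR⟩ := hΓcomp.exists_bound_of_continuousOn continuous_id.continuousOn
  set Kc : Set ((Fin n → ℝ) × (Fin n → ℝ)) := Metric.closedBall 0 (R + 3) with hKc
  have hKccomp : IsCompact Kc := isCompact_closedBall _ _
  have hKcconv : Convex ℝ Kc := convex_closedBall _ _
  have hΓK : Γ ⊆ Kc := by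
    intro z hz
    have := hR z hz
    simp only [id] at this
    rw [hKc, mem_closedBall_zero_iff]
    linarith
  have htube : ∀ z ∈ Γ, Metric.closedBall z 2 ⊆ Kc := by
    intro z hz w hw
    rw [mem_closedBall] at hw
    rw [hKc, mem_closedBall]
    have h1 : dist w 0 ≤ dist w z + dist z 0 := dist_triangle _ _ _
    have h2 : dist z 0 ≤ R := by
      have := hR z hz; simpa [dist_zero_right] using this
    linarith
  have hmemΓ : ∀ t ∈ Icc (-1:ℝ) (b+1), φ t x ∈ Γ := fun t ht => ⟨t, ht, rfl⟩
  -- bounds on the field and its derivative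
  obtain ⟨M0, hM0⟩ := hKccomp.exists_bound_of_continuousOn hXcont.continuousOn
  set M := max M0 0 with hMdef
  have hMnn : 0 ≤ M := le_max_right _ _
  have hM : ∀ z ∈ Kc, ‖peX H z‖ ≤ M := fun z hz => (hM0 z hz).trans (le_max_left _ _)
  obtain ⟨L0, hL0⟩ := hKccomp.exists_bound_of_continuousOn hBc.continuousOn
  set Ln : NNReal := Real.toNNReal L0 with hLn
  have hLb : ∀ z ∈ Kc, ‖fderiv ℝ (peX H) z‖₊ ≤ Ln := by
    intro z hz
    rw [hLn, ← NNReal.coe_le_coe, coe_nnnorm, Real.coe_toNNReal']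
    exact (hL0 z hz).trans (le_max_left _ _)
  have hXlip : LipschitzOnWith Ln (peX (n := n) H) Kc :=
    hKcconv.lipschitzOnWith_of_nnnorm_hasFDerivWithin_le
      (fun z _ => (hXd z).hasFDerivAt.hasFDerivWithinAt) hLb
  have hXlipneg : LipschitzOnWith Ln (fun z => -peX (n := n) H z) Kc := by
    intro z hz w hw
    simpa using hXlip hz hw
  set CE := Real.exp ((Ln : ℝ) * (b+1)) with hCE
  have hLnn : (0:ℝ) ≤ (Ln : ℝ) := Ln.coe_nonneg
  have hCE1 : (1:ℝ) ≤ CE := Real.one_le_exp (by positivity)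
  have hCEpos : (0:ℝ) < CE := by linarith
  set δ₀ := CE⁻¹ with hδ₀
  have hδ₀pos : 0 < δ₀ := by positivity
  -- forward and backward closeness of nearby trajectories
  have hfor : ∀ z, dist z x ≤ δ₀ → ∀ t ∈ Icc (0:ℝ) (b+1),
      dist (φ t z) (φ t x) ≤ dist z x * CE := by
    intro z hz t ht
    have hsm : dist z x * Real.exp ((Ln:ℝ) * (b+1)) ≤ 1 := by
      rw [← hCE]
      calc dist z x * CE ≤ δ₀ * CE := by
            apply mul_le_mul_of_nonneg_right hz hCEpos.le
      _ = 1 := by rw [hδ₀]; field_simp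
    have h1 := peBootstrap hXlip (l := b+1) (by linarith)
      (fun t => hasDφ x t) (fun t => hasDφ z t)
      (fun t ht => htube _ (hmemΓ t ⟨by linarith [ht.1], ht.2⟩))
      (by simpa [hφ0] using hz) hsm t ht
    calc dist (φ t z) (φ t x) ≤ dist z x * Real.exp ((Ln:ℝ) * t) := h1
    _ ≤ dist z x * CE := by
        apply mul_le_mul_of_nonneg_left _ dist_nonneg
        rw [hCE]
        exact Real.exp_le_exp.2 (mul_le_mul_of_nonneg_left ht.2 hLnn)
  have hback : ∀ z, dist z x ≤ δ₀ → ∀ t ∈ Icc (-1:ℝ) 0,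
      dist (φ t z) (φ t x) ≤ dist z x * CE := by
    intro z hz t ht
    have hnegD : ∀ (w : (Fin n → ℝ) × (Fin n → ℝ)) (τ : ℝ),
        HasDerivAt (fun s => φ (-s) w) (-peX H (φ (-τ) w)) τ := by
      intro w τ
      have h1 := (hasDφ w (-τ)).scomp τ (hasDerivAt_neg τ)
      simpa [Function.comp_def] using h1
    have hsm : dist z x * Real.exp ((Ln:ℝ) * 1) ≤ 1 := by
      calc dist z x * Real.exp ((Ln:ℝ) * 1) ≤ δ₀ * CE := by
            apply mul_le_mul hz _ (Real.exp_pos _).le hδ₀pos.le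
            rw [hCE]; exact Real.exp_le_exp.2 (by nlinarith)
      _ = 1 := by rw [hδ₀]; field_simp
    have h1 := peBootstrap hXlipneg (l := 1) zero_le_one
      (fun τ => hnegD x τ) (fun τ => hnegD z τ)
      (fun τ hτ => htube _ (hmemΓ (-τ) ⟨by linarith [hτ.2], by linarith [hτ.1]⟩))
      (by simpa [hφ0] using hz) hsm (-t) ⟨by linarith [ht.2], by linarith [ht.1]⟩
    simp only [neg_neg, hφ0] at h1
    calc dist (φ t z) (φ t x) ≤ dist z x * Real.exp ((Ln:ℝ) * (-t)) := h1
    _ ≤ dist z x * CE := by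
        apply mul_le_mul_of_nonneg_left _ dist_nonneg
        rw [hCE]
        exact Real.exp_le_exp.2 (mul_le_mul_of_nonneg_left (by linarith [ht.1, hb]) hLnn)
  have hclose : ∀ z, dist z x ≤ δ₀ → ∀ t ∈ Icc (-1:ℝ) (b+1),
      dist (φ t z) (φ t x) ≤ dist z x * CE := by
    intro z hz t ht
    rcases le_or_gt 0 t with h | h
    · exact hfor z hz t ⟨h, ht.2⟩
    · exact hback z hz t ⟨ht.1, h.le⟩
  have hMVT : ∀ σ ∈ Icc (-1:ℝ) 1, ‖φ σ x - x‖ ≤ M * |σ| := by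
    intro σ hσ
    have h1 := Convex.norm_image_sub_le_of_norm_hasDerivWithin_le
      (f := fun t => φ t x) (f' := fun t => peX H (φ t x)) (s := Icc (-1:ℝ) 1)
      (x := (0:ℝ)) (y := σ)
      (fun τ _ => (hasDφ x τ).hasDerivWithinAt)
      (fun τ hτ => hM _ (hΓK (hmemΓ τ ⟨hτ.1, by linarith [hτ.2, hb]⟩)))
      (convex_Icc _ _) (Set.mem_Icc.2 ⟨by norm_num, by norm_num⟩) hσ
    simpa [hφ0, Real.norm_eq_abs] using h1
  have hxK : x ∈ Kc := by
    have h0 : φ 0 x ∈ Γ := hmemΓ 0 ⟨by norm_num, by linarith⟩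
    rw [hφ0] at h0
    exact hΓK h0
  -- derivative of T along a direction
  have hTd : ∀ u : (Fin n → ℝ) × (Fin n → ℝ),
      HasDerivAt (fun s : ℝ => T (x + s • u)) (fderiv ℝ T x u) 0 := by
    intro u
    have hline : HasDerivAt (fun s : ℝ => x + s • u) u 0 := by
      simpa using ((hasDerivAt_id (0:ℝ)).smul_const u).const_add x
    have h0 : x + (0:ℝ) • u = x := by simp
    have hfd : HasFDerivAt T (fderiv ℝ T x) (x + (0:ℝ) • u) := by
      rw [h0]; exact ((hT.differentiable (by simp)) x).hasFDerivAt
    exact hfd.comp_hasDerivAt 0 hline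
  set Dt := fderiv ℝ T x with hDtdef
  set Xx := peX H x with hXxdef
  have keylim : ∀ u : (Fin n → ℝ) × (Fin n → ℝ),
      Tendsto (fun s : ℝ => s⁻¹ • (φ b (x + s • u) - x)) (𝓝[≠] (0:ℝ))
        (𝓝 (u - (Dt u) • Xx)) := by
    intro u
    set τf : ℝ → ℝ := fun s => T (x + s • u) - b with hτf
    have hlinec : Continuous (fun s : ℝ => x + s • u) :=
      continuous_const.add (continuous_id.smul continuous_const)
    have hτcont : Continuous τf := (hT.continuous.comp hlinec).sub continuous_const
    have hτ0 : τf 0 = 0 := by simp [hτf, hbdef]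
    have hτslope : Tendsto (fun s => s⁻¹ * τf s) (𝓝[≠] (0:ℝ)) (𝓝 (Dt u)) := by
      have h1 := hTd u
      rw [hasDerivAt_iff_tendsto_slope] at h1
      apply h1.congr'
      filter_upwards [self_mem_nhdsWithin] with s hs
      have hs0 : s ≠ 0 := hs
      rw [slope_def_field]
      simp only [hτf]
      field_simp
      simp only [zero_smul, add_zero, sub_zero, hbdef]
      ring
    have hflowid : ∀ s : ℝ, φ b (x + s • u) = φ (-(τf s)) (x + s • u) := by
      intro s
      have h1 := hper (b - T (x + s • u)) (x + s • u)
      rw [sub_add_cancel] at h1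
      rw [h1]
      congr 1
      simp only [hτf]
      ring
    set err : ℝ → (Fin n → ℝ) × (Fin n → ℝ) :=
      fun s => φ (-(τf s)) (x + s • u) - (x + s • u) + (τf s) • Xx with herrdef
    have hdecomp : ∀ s : ℝ, s ≠ 0 → s⁻¹ • (φ b (x + s • u) - x)
        = u - (s⁻¹ * τf s) • Xx + s⁻¹ • err s := by
      intro s hs
      rw [hflowid s]
      have e1 : s⁻¹ • (s • u) = u := by
        rw [smul_smul, inv_mul_cancel₀ hs, one_smul]
      have e2 : s⁻¹ • ((τf s) • Xx) = (s⁻¹ * τf s) • Xx := by rw [smul_smul]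
      calc s⁻¹ • (φ (-(τf s)) (x + s • u) - x)
          = s⁻¹ • (err s) + s⁻¹ • (s • u) - s⁻¹ • ((τf s) • Xx) := by
            rw [← smul_add, ← smul_sub]
            congr 1
            simp only [herrdef]
            abel
        _ = u - (s⁻¹ * τf s) • Xx + s⁻¹ • err s := by rw [e1, e2]; abel
    set C1 := |Dt u| + 1 with hC1
    have hC1pos : 0 < C1 := by positivity
    have herrbd : ∀ᶠ s in 𝓝[≠] (0:ℝ),
        ‖s⁻¹ • err s‖ ≤ ((Ln : ℝ) * (‖u‖ * CE + M * C1) * C1) * |s| := by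
      have ev1 : ∀ᶠ s in 𝓝[≠] (0:ℝ), |s⁻¹ * τf s| < C1 := by
        apply hτslope.abs.eventually_lt_const
        rw [hC1]; linarith [abs_nonneg (Dt u)]
      have ev2 : ∀ᶠ s in 𝓝[≠] (0:ℝ), |τf s| ≤ 1 := by
        apply Filter.Eventually.filter_mono nhdsWithin_le_nhds
        have h5 : Tendsto τf (𝓝 0) (𝓝 (τf 0)) := hτcont.continuousAt
        rw [hτ0] at h5
        have h6 := h5.abs
        rw [abs_zero] at h6
        exact (h6.eventually_lt_const one_pos).mono fun s hs => hs.le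
      have ev3 : ∀ᶠ s in 𝓝[≠] (0:ℝ), |s| * ‖u‖ ≤ δ₀ := by
        apply Filter.Eventually.filter_mono nhdsWithin_le_nhds
        have h5 : Tendsto (fun s : ℝ => |s| * ‖u‖) (𝓝 0) (𝓝 (|(0:ℝ)| * ‖u‖)) :=
          (continuous_abs.mul continuous_const).continuousAt
        rw [abs_zero, zero_mul] at h5
        exact (h5.eventually_lt_const hδ₀pos).mono fun s hs => hs.le
      filter_upwards [ev1, ev2, ev3, self_mem_nhdsWithin] with s hs1 hs2 hs3 hs0
      have hsne : s ≠ 0 := hs0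
      have hτbd : |τf s| ≤ C1 * |s| := by
        have : τf s = s * (s⁻¹ * τf s) := by field_simp
        rw [this, abs_mul]
        calc |s| * |s⁻¹ * τf s| ≤ |s| * C1 := by
              apply mul_le_mul_of_nonneg_left hs1.le (abs_nonneg s)
        _ = C1 * |s| := mul_comm _ _
      set xs := x + s • u with hxs
      have hdxs : dist xs x = |s| * ‖u‖ := by
        rw [dist_eq_norm, hxs]
        simp [norm_smul, abs_of_nonneg, Real.norm_eq_abs]
      have hdxsδ : dist xs x ≤ δ₀ := by rw [hdxs]; exact hs3
      -- MVT for g σ = φ σ xs - σ • Xx on uIcc 0 (-(τf s))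
      have hmem : ∀ σ ∈ uIcc (0:ℝ) (-(τf s)), |σ| ≤ |τf s| := by
        intro σ hσ
        rw [Set.uIcc_eq_union] at hσ
        rcases hσ with hσ | hσ
        · rw [abs_le]
          rcases Set.mem_Icc.1 hσ with ⟨h1, h2⟩
          constructor <;> [skip; skip]
          · linarith [neg_abs_le (τf s), abs_nonneg (τf s), neg_le.2 (neg_abs_le (τf s))]
          · linarith [le_abs_self (-(τf s)), abs_neg (τf s), le_abs_self (τf s), abs_nonneg (τf s)]
        · rw [abs_le]
          rcases Set.mem_Icc.1 hσ with ⟨h1, h2⟩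
          constructor
          · have := neg_abs_le (-(τf s)); rw [abs_neg] at this; linarith
          · linarith [abs_nonneg (τf s)]
      have hgbound : ∀ σ ∈ uIcc (0:ℝ) (-(τf s)),
          ‖peX H (φ σ xs) - Xx‖ ≤ (Ln : ℝ) * (|s| * ‖u‖ * CE + M * |τf s|) := by
        intro σ hσ
        have hσ1 : |σ| ≤ 1 := le_trans (hmem σ hσ) hs2
        have hσI : σ ∈ Icc (-1:ℝ) (b+1) := by
          rw [abs_le] at hσ1
          exact ⟨hσ1.1, by linarith [hσ1.2]⟩
        have hσI2 : σ ∈ Icc (-1:ℝ) 1 := by rw [abs_le] at hσ1; exact ⟨hσ1.1, hσ1.2⟩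
        have hdist1 : dist (φ σ xs) (φ σ x) ≤ dist xs x * CE := hclose xs hdxsδ σ hσI
        have hφσK : φ σ xs ∈ Kc := by
          apply htube _ (hmemΓ σ hσI)
          rw [mem_closedBall]
          calc dist (φ σ xs) (φ σ x) ≤ dist xs x * CE := hdist1
          _ ≤ δ₀ * CE := mul_le_mul_of_nonneg_right hdxsδ hCEpos.le
          _ = 1 := by rw [hδ₀]; field_simp
          _ ≤ 2 := by norm_num
        have hlip := hXlip.dist_le_mul _ hφσK _ hxK
        rw [← dist_eq_norm, hXxdef]
        calc dist (peX H (φ σ xs)) (peX H x) ≤ (Ln : ℝ) * dist (φ σ xs) x := hlip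
        _ ≤ (Ln : ℝ) * (|s| * ‖u‖ * CE + M * |τf s|) := by
            apply mul_le_mul_of_nonneg_left _ hLnn
            calc dist (φ σ xs) x ≤ dist (φ σ xs) (φ σ x) + dist (φ σ x) x := dist_triangle _ _ _
            _ ≤ dist xs x * CE + M * |σ| := by
                apply add_le_add hdist1
                have := hMVT σ hσI2
                rwa [← dist_eq_norm] at this
            _ ≤ |s| * ‖u‖ * CE + M * |τf s| := by
                rw [hdxs]
                exact add_le_add (le_refl _) (mul_le_mul_of_nonneg_left (hmem σ hσ) hMnn)
      have hmvt := Convex.norm_image_sub_le_of_norm_hasDerivWithin_le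
        (f := fun σ => φ σ xs - σ • Xx) (f' := fun σ => peX H (φ σ xs) - Xx)
        (s := uIcc (0:ℝ) (-(τf s))) (x := (0:ℝ)) (y := -(τf s))
        (fun σ _ => by
          apply HasDerivAt.hasDerivWithinAt
          have h1 : HasDerivAt (fun σ : ℝ => σ • Xx) Xx σ := by
            simpa using (hasDerivAt_id σ).smul_const Xx
          exact (hasDφ xs σ).sub h1)
        hgbound (convex_uIcc _ _) left_mem_uIcc right_mem_uIcc
      have herreq : err s = (φ (-(τf s)) xs - (-(τf s)) • Xx) - (φ 0 xs - (0:ℝ) • Xx) := by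
        rw [herrdef, hφ0]
        module
      have herrnorm : ‖err s‖ ≤ (Ln : ℝ) * (|s| * ‖u‖ * CE + M * |τf s|) * |τf s| := by
        rw [herreq]
        calc ‖(φ (-(τf s)) xs - (-(τf s)) • Xx) - (φ 0 xs - (0:ℝ) • Xx)‖
            ≤ (Ln : ℝ) * (|s| * ‖u‖ * CE + M * |τf s|) * ‖-(τf s) - 0‖ := hmvt
        _ = (Ln : ℝ) * (|s| * ‖u‖ * CE + M * |τf s|) * |τf s| := by
            rw [sub_zero, Real.norm_eq_abs, abs_neg]
      calc ‖s⁻¹ • err s‖ = |s|⁻¹ * ‖err s‖ := by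
            rw [norm_smul, Real.norm_eq_abs, abs_inv]
      _ ≤ |s|⁻¹ * ((Ln : ℝ) * (|s| * ‖u‖ * CE + M * |τf s|) * |τf s|) := by
            apply mul_le_mul_of_nonneg_left herrnorm (by positivity)
      _ ≤ |s|⁻¹ * ((Ln : ℝ) * (|s| * ‖u‖ * CE + M * (C1 * |s|)) * (C1 * |s|)) := by
            apply mul_le_mul_of_nonneg_left _ (by positivity)
            apply mul_le_mul _ hτbd (abs_nonneg _)
              (mul_nonneg hLnn (add_nonneg (by positivity) (mul_nonneg hMnn (by positivity))))
            apply mul_le_mul_of_nonneg_left _ hLnn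
            exact add_le_add (le_refl _) (mul_le_mul_of_nonneg_left hτbd hMnn)
      _ = ((Ln : ℝ) * (‖u‖ * CE + M * C1) * C1) * (|s|⁻¹ * |s| * |s|) := by ring
      _ = ((Ln : ℝ) * (‖u‖ * CE + M * C1) * C1) * |s| := by
            rw [inv_mul_cancel₀ (abs_ne_zero.2 hsne), one_mul]
    have hlim2 : Tendsto (fun s => u - (s⁻¹ * τf s) • Xx + s⁻¹ • err s) (𝓝[≠] (0:ℝ))
        (𝓝 (u - (Dt u) • Xx)) := by
      have h1 : Tendsto (fun s => (s⁻¹ * τf s) • Xx) (𝓝[≠] (0:ℝ)) (𝓝 ((Dt u) • Xx)) :=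
        hτslope.smul_const Xx
      have h2 : Tendsto (fun s : ℝ => s⁻¹ • err s) (𝓝[≠] (0:ℝ)) (𝓝 0) := by
        apply squeeze_zero_norm' herrbd
        have : Tendsto (fun s : ℝ => ((Ln : ℝ) * (‖u‖ * CE + M * C1) * C1) * |s|)
            (𝓝 (0:ℝ)) (𝓝 (((Ln : ℝ) * (‖u‖ * CE + M * C1) * C1) * |(0:ℝ)|)) :=
          (continuous_const.mul continuous_abs).continuousAt
        rw [abs_zero, mul_zero] at this
        exact this.mono_left nhdsWithin_le_nhds
      simpa using (tendsto_const_nhds.sub h1).add h2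
    apply hlim2.congr'
    filter_upwards [self_mem_nhdsWithin] with s hs
    exact (hdecomp s hs).symm
  -- conservation of the symplectic form along the linearized flow
  have key : ∀ u v : (Fin n → ℝ) × (Fin n → ℝ),
      Dt v * fderiv ℝ H x u = Dt u * fderiv ℝ H x v := by
    intro u v
    have hq : ∀ (w : (Fin n → ℝ) × (Fin n → ℝ)) (s t : ℝ),
        HasDerivAt (fun t => s⁻¹ • (φ t (x + s • w) - φ t x))
          (s⁻¹ • (peX H (φ t (x + s • w)) - peX H (φ t x))) t := fun w s t =>
      ((hasDφ (x + s • w) t).sub (hasDφ x t)).const_smul s⁻¹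
    have hdxs : ∀ (w : (Fin n → ℝ) × (Fin n → ℝ)) (s : ℝ),
        dist (x + s • w) x = |s| * ‖w‖ := by
      intro w s
      rw [dist_eq_norm, add_sub_cancel_left, norm_smul, Real.norm_eq_abs]
    have hqbd : ∀ (w : (Fin n → ℝ) × (Fin n → ℝ)) (s : ℝ), s ≠ 0 → |s| * ‖w‖ ≤ δ₀ →
        ∀ t ∈ Icc (0:ℝ) b, ‖s⁻¹ • (φ t (x + s • w) - φ t x)‖ ≤ ‖w‖ * CE := by
      intro w s hs hsw t ht
      have h1 := hclose (x + s • w) (by rw [hdxs]; exact hsw) t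
        ⟨by linarith [ht.1], by linarith [ht.2]⟩
      rw [hdxs] at h1
      rw [norm_smul, Real.norm_eq_abs, abs_inv, ← dist_eq_norm]
      calc |s|⁻¹ * dist (φ t (x + s • w)) (φ t x) ≤ |s|⁻¹ * (|s| * ‖w‖ * CE) :=
            mul_le_mul_of_nonneg_left h1 (by positivity)
      _ = ‖w‖ * CE := by field_simp [abs_ne_zero.2 hs]
    have hq0 : ∀ (w : (Fin n → ℝ) × (Fin n → ℝ)) (s : ℝ), s ≠ 0 →
        s⁻¹ • (φ 0 (x + s • w) - φ 0 x) = w := by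
      intro w s hs
      rw [hφ0, hφ0, add_sub_cancel_left, smul_smul, inv_mul_cancel₀ hs, one_smul]
    set No := ‖peOm n‖ + 1 with hNo
    have hNopos : 0 < No := by positivity
    have hOmbd : ∀ a c : (Fin n → ℝ) × (Fin n → ℝ), |peOm n a c| ≤ No * ‖a‖ * ‖c‖ := by
      intro a c
      have h1 := (peOm n).le_opNorm₂ a c
      rw [← Real.norm_eq_abs]
      calc ‖peOm n a c‖ ≤ ‖peOm n‖ * ‖a‖ * ‖c‖ := h1
      _ ≤ No * ‖a‖ * ‖c‖ := by
          apply mul_le_mul_of_nonneg_right _ (norm_nonneg c)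
          apply mul_le_mul_of_nonneg_right _ (norm_nonneg a)
          rw [hNo]; linarith
    set Cu := ‖u‖ * CE + 1 with hCu
    set Cv := ‖v‖ * CE + 1 with hCv
    have hCupos : 0 < Cu := by positivity
    have hCvpos : 0 < Cv := by positivity
    have lim1 : Tendsto (fun s : ℝ => peOm n (s⁻¹ • (φ b (x + s • u) - φ b x))
        (s⁻¹ • (φ b (x + s • v) - φ b x))) (𝓝[≠] (0:ℝ)) (𝓝 (peOm n u v)) := by
      rw [Metric.tendsto_nhdsWithin_nhds]
      intro ε hε
      set ε₂ := ε / (No * (Cu * Cv) * (b + 1) * 4) with hε₂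
      have hε₂pos : 0 < ε₂ := by positivity
      obtain ⟨r0, hr0pos, hr0⟩ := Metric.uniformContinuousOn_iff.1
        (hKccomp.uniformContinuousOn_of_continuous hBc.continuousOn) ε₂ hε₂pos
      set r := min (r0 / 2) 2 with hrdef
      have hrpos : 0 < r := by rw [hrdef]; positivity
      set W0 := max ‖u‖ ‖v‖ + 1 with hW0
      have hW0pos : 0 < W0 := by positivity
      have hW0u : ‖u‖ ≤ W0 := by rw [hW0]; linarith [le_max_left ‖u‖ ‖v‖]
      have hW0v : ‖v‖ ≤ W0 := by rw [hW0]; linarith [le_max_right ‖u‖ ‖v‖]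
      refine ⟨min (δ₀ / W0) (r / (CE * W0)), by positivity, ?_⟩
      intro s hsne' hsd
      have hsne : s ≠ 0 := hsne'
      rw [Real.dist_0_eq_abs] at hsd
      have hsδ₀ : |s| * W0 ≤ δ₀ := by
        have h1 : |s| < δ₀ / W0 := lt_of_lt_of_le hsd (min_le_left _ _)
        rw [lt_div_iff₀ hW0pos] at h1
        linarith
      have hsr : |s| * W0 * CE ≤ r := by
        have h1 : |s| < r / (CE * W0) := lt_of_lt_of_le hsd (min_le_right _ _)
        rw [lt_div_iff₀ (by positivity)] at h1
        nlinarith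
      have hsu : |s| * ‖u‖ ≤ δ₀ :=
        le_trans (mul_le_mul_of_nonneg_left hW0u (abs_nonneg s)) hsδ₀
      have hsv : |s| * ‖v‖ ≤ δ₀ :=
        le_trans (mul_le_mul_of_nonneg_left hW0v (abs_nonneg s)) hsδ₀
      have hsur : |s| * ‖u‖ * CE ≤ r :=
        le_trans (mul_le_mul_of_nonneg_right
          (mul_le_mul_of_nonneg_left hW0u (abs_nonneg s)) hCEpos.le) hsr
      have hsvr : |s| * ‖v‖ * CE ≤ r :=
        le_trans (mul_le_mul_of_nonneg_right
          (mul_le_mul_of_nonneg_left hW0v (abs_nonneg s)) hCEpos.le) hsr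
      -- Taylor estimate
      have htay : ∀ (w : (Fin n → ℝ) × (Fin n → ℝ)), |s| * ‖w‖ ≤ δ₀ → |s| * ‖w‖ * CE ≤ r →
          ∀ t ∈ Icc (0:ℝ) b,
          ‖s⁻¹ • (peX H (φ t (x + s • w)) - peX H (φ t x))
            - fderiv ℝ (peX H) (φ t x) (s⁻¹ • (φ t (x + s • w) - φ t x))‖ ≤ ε₂ * (‖w‖ * CE) := by
        intro w hw1 hw2 t ht
        have htΓ : φ t x ∈ Γ := hmemΓ t ⟨by linarith [ht.1], by linarith [ht.2]⟩
        have hzd : dist (φ t (x + s • w)) (φ t x) ≤ |s| * ‖w‖ * CE := by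
          have h1 := hclose (x + s • w) (by rw [hdxs]; exact hw1) t
            ⟨by linarith [ht.1], by linarith [ht.2]⟩
          rw [hdxs] at h1
          exact h1
        have hzball : φ t (x + s • w) ∈ Metric.closedBall (φ t x) r :=
          Metric.mem_closedBall.2 (le_trans hzd hw2)
        have hsub : Metric.closedBall (φ t x) r ⊆ Kc := fun y hy =>
          htube _ htΓ (Metric.closedBall_subset_closedBall (min_le_right _ _) hy)
        have hbnd : ∀ y ∈ Metric.closedBall (φ t x) r,
            ‖fderiv ℝ (peX H) y - fderiv ℝ (peX H) (φ t x)‖ ≤ ε₂ := by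
          intro y hy
          have h2 : dist y (φ t x) < r0 := by
            have := Metric.mem_closedBall.1 hy
            have hr2 : r ≤ r0 / 2 := min_le_left _ _
            linarith
          have h3 := hr0 y (hsub hy) (φ t x) (hsub (Metric.mem_closedBall_self hrpos.le)) h2
          rw [dist_eq_norm] at h3
          exact h3.le
        have hmvt := Convex.norm_image_sub_le_of_norm_hasFDerivWithin_le'
          (f := peX H) (f' := fun z => fderiv ℝ (peX H) z) (φ := fderiv ℝ (peX H) (φ t x))
          (s := Metric.closedBall (φ t x) r) (x := φ t x) (y := φ t (x + s • w))
          (fun y _ => (hXd y).hasFDerivAt.hasFDerivWithinAt) hbnd (convex_closedBall _ _)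
          (Metric.mem_closedBall_self hrpos.le) hzball
        have hlin : fderiv ℝ (peX H) (φ t x) (s⁻¹ • (φ t (x + s • w) - φ t x))
            = s⁻¹ • fderiv ℝ (peX H) (φ t x) (φ t (x + s • w) - φ t x) :=
          (fderiv ℝ (peX H) (φ t x)).map_smul _ _
        calc ‖s⁻¹ • (peX H (φ t (x + s • w)) - peX H (φ t x))
              - fderiv ℝ (peX H) (φ t x) (s⁻¹ • (φ t (x + s • w) - φ t x))‖
            = ‖s⁻¹ • (peX H (φ t (x + s • w)) - peX H (φ t x)
                - fderiv ℝ (peX H) (φ t x) (φ t (x + s • w) - φ t x))‖ := by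
              rw [hlin, ← smul_sub]
          _ = |s|⁻¹ * ‖peX H (φ t (x + s • w)) - peX H (φ t x)
                - fderiv ℝ (peX H) (φ t x) (φ t (x + s • w) - φ t x)‖ := by
              rw [norm_smul, Real.norm_eq_abs, abs_inv]
          _ ≤ |s|⁻¹ * (ε₂ * ‖φ t (x + s • w) - φ t x‖) :=
              mul_le_mul_of_nonneg_left hmvt (by positivity)
          _ ≤ |s|⁻¹ * (ε₂ * (|s| * ‖w‖ * CE)) := by
              apply mul_le_mul_of_nonneg_left _ (by positivity)
              apply mul_le_mul_of_nonneg_left _ hε₂pos.le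
              rw [← dist_eq_norm]
              exact hzd
          _ = ε₂ * (‖w‖ * CE) := by field_simp [abs_ne_zero.2 hsne]
      -- derivative of F and its bound
      have hFd : ∀ t : ℝ, HasDerivAt
          (fun t => peOm n (s⁻¹ • (φ t (x + s • u) - φ t x)) (s⁻¹ • (φ t (x + s • v) - φ t x)))
          (peOm n (s⁻¹ • (peX H (φ t (x + s • u)) - peX H (φ t x)))
              (s⁻¹ • (φ t (x + s • v) - φ t x))
            + peOm n (s⁻¹ • (φ t (x + s • u) - φ t x))
              (s⁻¹ • (peX H (φ t (x + s • v)) - peX H (φ t x)))) t := by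
        intro t
        have h1 := hq u s t
        have h2 := hq v s t
        have h3 : HasDerivAt (fun t => peOm n (s⁻¹ • (φ t (x + s • u) - φ t x)))
            (peOm n (s⁻¹ • (peX H (φ t (x + s • u)) - peX H (φ t x)))) t :=
          ((peOm n).hasFDerivAt).comp_hasDerivAt t h1
        exact h3.clm_apply h2
      have hFbd : ∀ t ∈ Icc (0:ℝ) b,
          ‖peOm n (s⁻¹ • (peX H (φ t (x + s • u)) - peX H (φ t x)))
              (s⁻¹ • (φ t (x + s • v) - φ t x))
            + peOm n (s⁻¹ • (φ t (x + s • u) - φ t x))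
              (s⁻¹ • (peX H (φ t (x + s • v)) - peX H (φ t x)))‖
            ≤ 2 * (No * (Cu * Cv)) * ε₂ := by
        intro t ht
        set Qu := s⁻¹ • (φ t (x + s • u) - φ t x) with hQu
        set Qv := s⁻¹ • (φ t (x + s • v) - φ t x) with hQv
        set Eu := s⁻¹ • (peX H (φ t (x + s • u)) - peX H (φ t x))
          - fderiv ℝ (peX H) (φ t x) Qu with hEu
        set Ev := s⁻¹ • (peX H (φ t (x + s • v)) - peX H (φ t x))
          - fderiv ℝ (peX H) (φ t x) Qv with hEv
        have hEu' : s⁻¹ • (peX H (φ t (x + s • u)) - peX H (φ t x))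
            = fderiv ℝ (peX H) (φ t x) Qu + Eu := by rw [hEu]; abel
        have hEv' : s⁻¹ • (peX H (φ t (x + s • v)) - peX H (φ t x))
            = fderiv ℝ (peX H) (φ t x) Qv + Ev := by rw [hEv]; abel
        rw [hEu', hEv', map_add, ContinuousLinearMap.add_apply, (peOm n Qu).map_add]
        have hzero := peOm_B hH (φ t x) Qu Qv
        have hQub : ‖Qu‖ ≤ Cu := by
          rw [hCu]
          have := hqbd u s hsne hsu t ht
          rw [hQu]; linarith
        have hQvb : ‖Qv‖ ≤ Cv := by
          rw [hCv]
          have := hqbd v s hsne hsv t ht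
          rw [hQv]; linarith
        have hEub : ‖Eu‖ ≤ ε₂ * Cu := by
          have := htay u hsu hsur t ht
          rw [hEu]
          calc ‖s⁻¹ • (peX H (φ t (x + s • u)) - peX H (φ t x))
              - fderiv ℝ (peX H) (φ t x) Qu‖ ≤ ε₂ * (‖u‖ * CE) := this
          _ ≤ ε₂ * Cu := by rw [hCu]; nlinarith
        have hEvb : ‖Ev‖ ≤ ε₂ * Cv := by
          have := htay v hsv hsvr t ht
          rw [hEv]
          calc ‖s⁻¹ • (peX H (φ t (x + s • v)) - peX H (φ t x))
              - fderiv ℝ (peX H) (φ t x) Qv‖ ≤ ε₂ * (‖v‖ * CE) := this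
          _ ≤ ε₂ * Cv := by rw [hCv]; nlinarith
        have hzero2 : peOm n (fderiv ℝ (peX H) (φ t x) Qu) Qv
            + peOm n Qu (fderiv ℝ (peX H) (φ t x) Qv) = 0 := hzero
        have hb1 : |peOm n Eu Qv| ≤ No * (ε₂ * Cu) * Cv := by
          calc |peOm n Eu Qv| ≤ No * ‖Eu‖ * ‖Qv‖ := hOmbd Eu Qv
          _ ≤ No * (ε₂ * Cu) * Cv := by
              apply mul_le_mul (mul_le_mul_of_nonneg_left hEub hNopos.le) hQvb
                (norm_nonneg _) (by positivity)
        have hb2 : |peOm n Qu Ev| ≤ No * Cu * (ε₂ * Cv) := by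
          calc |peOm n Qu Ev| ≤ No * ‖Qu‖ * ‖Ev‖ := hOmbd Qu Ev
          _ ≤ No * Cu * (ε₂ * Cv) := by
              apply mul_le_mul (mul_le_mul_of_nonneg_left hQub hNopos.le) hEvb
                (norm_nonneg _) (by positivity)
        have hre : peOm n (fderiv ℝ (peX H) (φ t x) Qu) Qv + peOm n Eu Qv
              + (peOm n Qu (fderiv ℝ (peX H) (φ t x) Qv) + peOm n Qu Ev)
            = peOm n Eu Qv + peOm n Qu Ev
              + (peOm n (fderiv ℝ (peX H) (φ t x) Qu) Qv
                 + peOm n Qu (fderiv ℝ (peX H) (φ t x) Qv)) := by ring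
        rw [hre, hzero2, add_zero, Real.norm_eq_abs]
        calc |peOm n Eu Qv + peOm n Qu Ev| ≤ |peOm n Eu Qv| + |peOm n Qu Ev| := abs_add_le _ _
        _ ≤ No * (ε₂ * Cu) * Cv + No * Cu * (ε₂ * Cv) := add_le_add hb1 hb2
        _ = 2 * (No * (Cu * Cv)) * ε₂ := by ring
      -- MVT for F on [0, b]
      have hmvtF := Convex.norm_image_sub_le_of_norm_hasDerivWithin_le
        (f := fun t => peOm n (s⁻¹ • (φ t (x + s • u) - φ t x))
          (s⁻¹ • (φ t (x + s • v) - φ t x)))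
        (f' := fun t => peOm n (s⁻¹ • (peX H (φ t (x + s • u)) - peX H (φ t x)))
              (s⁻¹ • (φ t (x + s • v) - φ t x))
            + peOm n (s⁻¹ • (φ t (x + s • u) - φ t x))
              (s⁻¹ • (peX H (φ t (x + s • v)) - peX H (φ t x))))
        (s := Icc (0:ℝ) b) (x := (0:ℝ)) (y := b)
        (fun t _ => (hFd t).hasDerivWithinAt) hFbd (convex_Icc _ _)
        ⟨le_refl 0, hb.le⟩ ⟨hb.le, le_refl b⟩
      simp only [hq0 u s hsne, hq0 v s hsne] at hmvtF
      have h9 : 2 * (No * (Cu * Cv)) * ε₂ * b < ε := by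
        have hPpos : (0:ℝ) < No * (Cu * Cv) := by positivity
        rw [hε₂, div_eq_mul_inv,
          show 2 * (No * (Cu * Cv)) * (ε * (No * (Cu * Cv) * (b + 1) * 4)⁻¹) * b
            = ε * ((2 * (No * (Cu * Cv)) * b) * (No * (Cu * Cv) * (b + 1) * 4)⁻¹) from by ring]
        calc ε * ((2 * (No * (Cu * Cv)) * b) * (No * (Cu * Cv) * (b + 1) * 4)⁻¹) < ε * 1 := by
              apply mul_lt_mul_of_pos_left _ hε
              rw [← div_eq_mul_inv, div_lt_one (by positivity)]
              nlinarith [mul_pos hPpos hb]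
        _ = ε := mul_one ε
      rw [Real.dist_eq]
      calc |peOm n (s⁻¹ • (φ b (x + s • u) - φ b x)) (s⁻¹ • (φ b (x + s • v) - φ b x))
            - peOm n u v|
          ≤ 2 * (No * (Cu * Cv)) * ε₂ * ‖b - 0‖ := by
            rw [← Real.norm_eq_abs]; exact hmvtF
      _ = 2 * (No * (Cu * Cv)) * ε₂ * b := by
            rw [sub_zero, Real.norm_eq_abs, abs_of_pos hb]
      _ < ε := h9
    -- second limit via keylim
    have lim2 : Tendsto (fun s : ℝ => peOm n (s⁻¹ • (φ b (x + s • u) - φ b x))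
        (s⁻¹ • (φ b (x + s • v) - φ b x))) (𝓝[≠] (0:ℝ))
        (𝓝 (peOm n (u - (Dt u) • Xx) (v - (Dt v) • Xx))) := by
      have hco : Continuous fun p : ((Fin n → ℝ) × (Fin n → ℝ)) × ((Fin n → ℝ) × (Fin n → ℝ)) =>
        peOm n p.1 p.2 := (peOm n).continuous₂
      have h1 := (keylim u).prodMk_nhds (keylim v)
      have h2 := (hco.tendsto ((u - (Dt u) • Xx, v - (Dt v) • Xx))).comp h1
      have h3 : (fun s : ℝ => peOm n (s⁻¹ • (φ b (x + s • u) - x)) (s⁻¹ • (φ b (x + s • v) - x)))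
          = (fun p : ((Fin n → ℝ) × (Fin n → ℝ)) × ((Fin n → ℝ) × (Fin n → ℝ)) => peOm n p.1 p.2)
            ∘ (fun s : ℝ => (s⁻¹ • (φ b (x + s • u) - x), s⁻¹ • (φ b (x + s • v) - x))) := rfl
      rw [hφbx]
      rw [h3]
      exact h2
    have huniq := tendsto_nhds_unique lim1 lim2
    have hXu : peOm n Xx u = fderiv ℝ H x u := by rw [hXxdef]; exact peOm_X H x u
    have hXv : peOm n Xx v = fderiv ℝ H x v := by rw [hXxdef]; exact peOm_X H x v
    have hexp : peOm n (u - (Dt u) • Xx) (v - (Dt v) • Xx)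
        = peOm n u v - Dt v * peOm n u Xx - Dt u * peOm n Xx v
          + Dt u * (Dt v * peOm n Xx Xx) := by
      simp only [map_sub, map_smul, ContinuousLinearMap.sub_apply,
        ContinuousLinearMap.smul_apply, smul_eq_mul]
      ring
    rw [hexp, peOm_self, peOm_skew u Xx, hXu, hXv] at huniq
    -- huniq : peOm u v = peOm u v - Dt v * (- Dh u) - Dt u * Dh v + Dt u * (Dt v * 0)
    nlinarith [huniq]
  -- final algebra
  obtain ⟨u₀, hu₀⟩ : ∃ u₀, fderiv ℝ H x u₀ ≠ 0 := by
    by_contra h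
    push_neg at h
    exact hDh (ContinuousLinearMap.ext fun w => by simpa using h w)
  set cc := Dt u₀ / fderiv ℝ H x u₀ with hcc
  have hDteq : Dt = cc • fderiv ℝ H x := by
    apply ContinuousLinearMap.ext
    intro w
    have h1 := key u₀ w
    rw [ContinuousLinearMap.smul_apply, smul_eq_mul, hcc]
    field_simp
    linarith [h1]
  have hTdiffx : DifferentiableAt ℝ T x := (hT.differentiable (by simp)) x
  have hfr : HasFDerivAt (fun y => 2 * π / T y) ((2 * π * (-((T x) ^ 2)⁻¹)) • Dt) x := by
    have h1 : HasDerivAt (fun w : ℝ => 2 * π * w⁻¹) (2 * π * (-((T x) ^ 2)⁻¹)) (T x) :=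
      (hasDerivAt_inv (ne_of_gt hb)).const_mul (2 * π)
    have h2 := h1.comp_hasFDerivAt x hTdiffx.hasFDerivAt
    have h3 : (fun y => 2 * π / T y) = (fun y => 2 * π * (T y)⁻¹) := by
      funext y; rw [div_eq_mul_inv]
    rw [h3]
    exact h2
  refine ⟨1, 2 * π * ((T x) ^ 2)⁻¹ * cc, by simp, ?_⟩
  rw [hfr.fderiv, hDteq, one_smul, smul_smul, ← add_smul]
  have hco : 2 * π * (-((T x) ^ 2)⁻¹) * cc + 2 * π * ((T x) ^ 2)⁻¹ * cc = 0 := by ring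
  rw [hco, zero_smul]

end
end

section
/- Elastic pendulum first-order average: on ℝ⁴ with the 2π-periodic harmonic-oscillator flow φ, the average of H₁(q₁,q₂,p₁,p₂) = −q₁²(1+q₂)/2 is ⟨H₁⟩(q₁,q₂,p₁,p₂) = −(q₁² + p₁²)/4; in Hopf variables, ⟨H₁⟩ = −(w₄ + w₃)/8 with w₃ = q₁²+p₁²−q₂²−p₂² and w₄ = q₁²+q₂²+p₁²+p₂². -/
open Real

/-- The 2π-periodic flow of the 2D harmonic oscillator on ℝ⁴,
with coordinates `(q₁, q₂, p₁, p₂)`. -/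
noncomputable def oscFlow (t : ℝ) (x : ℝ × ℝ × ℝ × ℝ) : ℝ × ℝ × ℝ × ℝ :=
  (x.1 * cos t + x.2.2.1 * sin t,
   x.2.1 * cos t + x.2.2.2 * sin t,
   x.2.2.1 * cos t - x.1 * sin t,
   x.2.2.2 * cos t - x.2.1 * sin t)

/-- The elastic-pendulum perturbation `H₁ = −q₁²(1+q₂)/2`. -/
noncomputable def pendH1 (x : ℝ × ℝ × ℝ × ℝ) : ℝ :=
  -(x.1 ^ 2 * (1 + x.2.1)) / 2

lemma pend_integral (a q2 b p2 : ℝ) :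
    (∫ t in (0:ℝ)..(2 * π), pendH1 (oscFlow t (a, q2, b, p2)))
      = -(a ^ 2 + b ^ 2) * π / 2 := by
  have hfun : ∀ t : ℝ, pendH1 (oscFlow t (a, q2, b, p2)) =
      (-(1/2) * a ^ 2) * cos t ^ 2 + (-(a * b)) * (sin t * cos t)
      + (-(1/2) * b ^ 2) * sin t ^ 2
      + (-(1/2) * q2 * a ^ 2) * cos t + (-(1/2) * p2 * b ^ 2) * sin t
      + (-(1/2) * (2 * q2 * a * b + p2 * (a ^ 2 - b ^ 2))) * (cos t ^ 2 * sin t)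
      + (-(1/2) * (q2 * (b ^ 2 - a ^ 2) + 2 * p2 * a * b)) * (sin t ^ 2 * cos t) := by
    intro t
    have h := sin_sq_add_cos_sq t
    simp only [pendH1, oscFlow]
    linear_combination (-(1/2) * q2 * a ^ 2 * cos t - (1/2) * p2 * b ^ 2 * sin t) * h
  simp only [hfun]
  rw [intervalIntegral.integral_add (by apply Continuous.intervalIntegrable; fun_prop)
        (by apply Continuous.intervalIntegrable; fun_prop),
      intervalIntegral.integral_add (by apply Continuous.intervalIntegrable; fun_prop)
        (by apply Continuous.intervalIntegrable; fun_prop),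
      intervalIntegral.integral_add (by apply Continuous.intervalIntegrable; fun_prop)
        (by apply Continuous.intervalIntegrable; fun_prop),
      intervalIntegral.integral_add (by apply Continuous.intervalIntegrable; fun_prop)
        (by apply Continuous.intervalIntegrable; fun_prop),
      intervalIntegral.integral_add (by apply Continuous.intervalIntegrable; fun_prop)
        (by apply Continuous.intervalIntegrable; fun_prop),
      intervalIntegral.integral_add (by apply Continuous.intervalIntegrable; fun_prop)
        (by apply Continuous.intervalIntegrable; fun_prop)]
  have h1 : (∫ x in (0:ℝ)..(2 * π), cos x ^ 2 * sin x) = 0 := by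
    have h := @integral_sin_mul_cos_sq 0 (2 * π)
    simp only [cos_two_pi, cos_zero] at h
    rw [show (fun x : ℝ => cos x ^ 2 * sin x) = fun x : ℝ => sin x * cos x ^ 2 from
      funext fun x => mul_comm _ _]
    simp [h]
  have h2 : (∫ x in (0:ℝ)..(2 * π), sin x ^ 2 * cos x) = 0 := by
    have h := @integral_sin_sq_mul_cos 0 (2 * π)
    simp only [sin_two_pi, sin_zero] at h
    simp [h]
  simp [intervalIntegral.integral_const_mul, integral_sin_mul_cos₁, h1, h2]
  ring

/-- Elastic pendulum first-order average: `⟨H₁⟩ = −(q₁²+p₁²)/4 = −(w₄+w₃)/8`. -/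
theorem elastic_pendulum_first_order_average (x : ℝ × ℝ × ℝ × ℝ) :
    ((1 / (2 * π)) * ∫ t in (0:ℝ)..(2 * π), pendH1 (oscFlow t x))
      = -(x.1 ^ 2 + x.2.2.1 ^ 2) / 4 ∧
    ((1 / (2 * π)) * ∫ t in (0:ℝ)..(2 * π), pendH1 (oscFlow t x))
      = -((x.1 ^ 2 + x.2.1 ^ 2 + x.2.2.1 ^ 2 + x.2.2.2 ^ 2)
          + (x.1 ^ 2 + x.2.2.1 ^ 2 - x.2.1 ^ 2 - x.2.2.2 ^ 2)) / 8 := by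
  obtain ⟨a, q2, b, p2⟩ := x
  have h := pend_integral a q2 b p2
  have hπ : (π : ℝ) ≠ 0 := pi_ne_zero
  constructor <;> · simp only [h]; field_simp; ring
end

section
/- Invariance of the symplectic structure under the S¹-action: let H : ℝⁿ×ℝⁿ → ℝ be smooth with complete canonical Hamiltonian vector field X_H whose flow is periodic with smooth frequency function ω > 0, and let ψ be the 2π-periodic flow of the generator Υ = (1/ω) X_H. Then each map ψ_t preserves the canonical symplectic form: for every t ∈ ℝ, x ∈ ℝⁿ×ℝⁿ and tangent vectors u, v ∈ ℝⁿ×ℝⁿ, ω₀(Dψ_t(x) u, Dψ_t(x) v) = ω₀(u, v), where ω₀((u_q,u_p),(v_q,v_p)) = ⟨u_p, v_q⟩ − ⟨u_q, v_p⟩ and Dψ_t(x) is the total derivative of ψ_t at x. -/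
open Real

/-- The canonical Hamiltonian vector field `X_H = (∂H/∂p, −∂H/∂q)` on ℝⁿ × ℝⁿ. -/
noncomputable def hamVF {n : ℕ} (H : ((Fin n → ℝ) × (Fin n → ℝ)) → ℝ)
    (x : (Fin n → ℝ) × (Fin n → ℝ)) : (Fin n → ℝ) × (Fin n → ℝ) :=
  (fun i => fderiv ℝ H x (0, Pi.single i 1),
   fun i => - fderiv ℝ H x (Pi.single i 1, 0))

/-- The canonical symplectic form `ω₀((u_q,u_p),(v_q,v_p)) = ⟨u_p,v_q⟩ − ⟨u_q,v_p⟩`. -/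
noncomputable def omega0 {n : ℕ} (u v : (Fin n → ℝ) × (Fin n → ℝ)) : ℝ :=
  (∑ i, u.2 i * v.1 i) - ∑ i, u.1 i * v.2 i

open Set Metric Topology Filter NNReal

namespace SympAux

variable {n : ℕ}

abbrev Esp (n : ℕ) := (Fin n → ℝ) × (Fin n → ℝ)

lemma omega0_add_left (u w v : Esp n) :
    omega0 (u + w) v = omega0 u v + omega0 w v := by
  simp [omega0, add_mul, Finset.sum_add_distrib]; ring

lemma omega0_add_right (u w v : Esp n) :
    omega0 u (w + v) = omega0 u w + omega0 u v := by
  simp [omega0, mul_add, Finset.sum_add_distrib]; ring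

lemma omega0_smul_left (a : ℝ) (u v : Esp n) :
    omega0 (a • u) v = a * omega0 u v := by
  simp [omega0, Finset.mul_sum, mul_assoc, mul_sub]

lemma omega0_smul_right (a : ℝ) (u v : Esp n) :
    omega0 u (a • v) = a * omega0 u v := by
  simp only [omega0, Prod.smul_fst, Prod.smul_snd, Pi.smul_apply, smul_eq_mul, mul_sub,
    Finset.mul_sum]
  congr 1 <;> exact Finset.sum_congr rfl (fun i _ => by ring)

lemma omega0_self (u : Esp n) : omega0 u u = 0 := by
  rw [omega0, sub_eq_zero]
  exact Finset.sum_congr rfl fun i _ => mul_comm _ _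

/-- The continuous linear map turning `dH` into the Hamiltonian vector field. -/
noncomputable def Lmap (n : ℕ) : ((Esp n) →L[ℝ] ℝ) →L[ℝ] (Esp n) :=
  ContinuousLinearMap.prod
    (ContinuousLinearMap.pi fun i =>
      ContinuousLinearMap.apply ℝ ℝ ((0, Pi.single i 1) : Esp n))
    (ContinuousLinearMap.pi fun i =>
      -(ContinuousLinearMap.apply ℝ ℝ ((Pi.single i 1, 0) : Esp n)))

lemma hamVF_eq (H : Esp n → ℝ) : hamVF H = fun x => Lmap n (fderiv ℝ H x) := by
  funext x
  simp [hamVF, Lmap]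

lemma contDiff_hamVF {H : Esp n → ℝ} (hH : ContDiff ℝ (⊤ : ℕ∞) H) :
    ContDiff ℝ (⊤ : ℕ∞) (hamVF H) := by
  rw [hamVF_eq]
  exact (Lmap n).contDiff.comp (hH.fderiv_right (by simp))

lemma hasFDerivAt_hamVF {H : Esp n → ℝ} (hH : ContDiff ℝ (⊤ : ℕ∞) H) (y : Esp n) :
    HasFDerivAt (hamVF H) ((Lmap n).comp (fderiv ℝ (fderiv ℝ H) y)) y := by
  rw [hamVF_eq]
  exact ((Lmap n).hasFDerivAt).comp y
    (((hH.fderiv_right (m := (⊤ : ℕ∞)) (by simp)).differentiable (by simp) _).hasFDerivAt)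

/-- decomposition of a linear functional -/
lemma clm_decomp (φ : (Esp n) →L[ℝ] ℝ) (z : Esp n) :
    φ z = (∑ i, z.1 i * φ (Pi.single i 1, 0)) + ∑ i, z.2 i * φ (0, Pi.single i 1) := by
  have hz : z = (∑ i, z.1 i • ((Pi.single i 1 : Fin n → ℝ), (0 : Fin n → ℝ)))
      + ∑ i, z.2 i • ((0 : Fin n → ℝ), (Pi.single i 1 : Fin n → ℝ)) := by
    ext j
    · simp [Prod.fst_sum, Prod.snd_sum, Finset.sum_apply, Pi.single_apply]
    · simp [Prod.fst_sum, Prod.snd_sum, Finset.sum_apply, Pi.single_apply]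
  conv_lhs => rw [hz]
  rw [map_add, map_sum, map_sum]
  simp only [map_smul, smul_eq_mul]

lemma isymp {H : Esp n → ℝ} (hH : ContDiff ℝ (⊤ : ℕ∞) H) (y w z : Esp n) :
    omega0 (fderiv ℝ (hamVF H) y w) z + omega0 w (fderiv ℝ (hamVF H) y z) = 0 := by
  have hd := (hasFDerivAt_hamVF hH y).fderiv
  rw [hd]
  set B := fderiv ℝ (fderiv ℝ H) y with hB
  have hsymm : ∀ a b : Esp n, B a b = B b a := by
    intro a b
    exact second_derivative_symmetric
      (fun z => (hH.differentiable (by simp) z).hasFDerivAt)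
      ((((hH.fderiv_right (m := (⊤ : ℕ∞)) (by simp)).differentiable (by simp)) y).hasFDerivAt) a b
  have h1 : omega0 ((Lmap n) (B w)) z = - B w z := by
    rw [clm_decomp (B w) z]
    simp only [omega0, Lmap, ContinuousLinearMap.prod_apply, ContinuousLinearMap.pi_apply,
      ContinuousLinearMap.neg_apply, ContinuousLinearMap.apply_apply]
    have e1 : ∑ x, -(B w) (Pi.single x 1, 0) * z.1 x
        = -∑ x, z.1 x * (B w) (Pi.single x 1, 0) := by
      rw [← Finset.sum_neg_distrib]
      exact Finset.sum_congr rfl fun i _ => by ring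
    have e2 : ∑ x, (B w) (0, Pi.single x 1) * z.2 x
        = ∑ x, z.2 x * (B w) (0, Pi.single x 1) := Finset.sum_congr rfl fun i _ => mul_comm _ _
    rw [e1, e2]
    ring
  have h2 : omega0 w ((Lmap n) (B z)) = B z w := by
    rw [clm_decomp (B z) w]
    simp only [omega0, Lmap, ContinuousLinearMap.prod_apply, ContinuousLinearMap.pi_apply,
      ContinuousLinearMap.neg_apply, ContinuousLinearMap.apply_apply]
    have e2 : ∑ x, w.1 x * -(B z) (Pi.single x 1, 0)
        = -∑ x, w.1 x * (B z) (Pi.single x 1, 0) := by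
      rw [← Finset.sum_neg_distrib]
      exact Finset.sum_congr rfl fun i _ => by ring
    rw [e2]
    ring
  simp only [ContinuousLinearMap.comp_apply, h1, h2]
  rw [hsymm w z]
  ring


lemma flow_trap {G : Esp n → Esp n} {Θ : ℝ → Esp n → Esp n}
    (hΘ : ∀ t y, HasDerivAt (fun τ => Θ τ y) (G (Θ t y)) t)
    (hΘ0 : ∀ z, Θ 0 z = z)
    {R : ℝ} {L : ℝ≥0}
    (hLip : LipschitzOnWith L G (closedBall 0 R))
    {y₀ : Esp n} {T : ℝ} (hT : 0 ≤ T)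
    (htraj : ∀ σ ∈ Icc 0 T, Θ σ y₀ ∈ closedBall 0 (R - 1))
    {y : Esp n} (hy : dist y y₀ ≤ exp (-(L * T)) / 2) :
    ∀ s ∈ Icc 0 T, Θ s y ∈ closedBall 0 R ∧
      dist (Θ s y) (Θ s y₀) ≤ dist y y₀ * exp (L * s) := by
  have hcont : ∀ z : Esp n, Continuous (fun σ => Θ σ z) := fun z =>
    continuous_iff_continuousAt.2 fun t => (hΘ t z).continuousAt
  set d : ℝ → ℝ := fun σ => dist (Θ σ y) (Θ σ y₀) with hd
  have hdcont : Continuous d := ((hcont y).dist (hcont y₀))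
  have hexp_le_one : exp (-(L * T)) ≤ 1 := by
    rw [exp_le_one_iff]
    exact neg_nonpos.mpr (by positivity)
  have hd00 : d 0 = dist y y₀ := by rw [hd]; simp [hΘ0]
  have hd0 : d 0 ≤ 1 / 2 := by
    rw [hd00]
    refine hy.trans ?_
    have := hexp_le_one
    linarith
  -- membership of y₀'s trajectory in the big ball
  have hy₀B : ∀ σ ∈ Icc 0 T, Θ σ y₀ ∈ closedBall 0 R := fun σ hσ => by
    have := htraj σ hσ
    rw [mem_closedBall] at this ⊢
    linarith [dist_nonneg (x := Θ σ y₀) (y := (0 : Esp n))]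
  -- the set where d stays ≤ 1
  set A : Set ℝ := {s ∈ Icc 0 T | ∀ σ ∈ Icc 0 s, d σ ≤ 1} with hA
  have h0A : (0 : ℝ) ∈ A := by
    refine ⟨⟨le_refl _, hT⟩, fun σ hσ => ?_⟩
    have : σ = 0 := le_antisymm hσ.2 hσ.1
    rw [this]; linarith
  have hbdd : BddAbove A := ⟨T, fun s hs => hs.1.2⟩
  set τ := sSup A with hτ
  have hτmem : τ ∈ Icc 0 T :=
    ⟨le_csSup hbdd h0A, csSup_le ⟨0, h0A⟩ fun s hs => hs.1.2⟩
  have hdleIco : ∀ σ ∈ Ico 0 τ, d σ ≤ 1 := by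
    intro σ hσ
    obtain ⟨s, hsA, hlt⟩ := exists_lt_of_lt_csSup ⟨0, h0A⟩ hσ.2
    exact hsA.2 σ ⟨hσ.1, hlt.le⟩
  have hdleτ : ∀ σ ∈ Icc 0 τ, d σ ≤ 1 := by
    intro σ hσ
    rcases lt_or_eq_of_le hσ.2 with hlt | heq
    · exact hdleIco σ ⟨hσ.1, hlt⟩
    · rcases eq_or_lt_of_le hσ.1 with h0 | h0
      · rw [← h0]; linarith
      · have hnb : (𝓝[<] σ).NeBot := inferInstance
        have htd : Filter.Tendsto d (𝓝[<] σ) (𝓝 (d σ)) :=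
          (hdcont.continuousWithinAt).tendsto
        refine le_of_tendsto htd ?_
        filter_upwards [eventually_nhdsWithin_of_eventually_nhds
          (eventually_gt_nhds h0), self_mem_nhdsWithin] with ρ h1 h2
        exact hdleIco ρ ⟨h1.le, heq ▸ h2⟩
  -- both trajectories are in the ball up to time τ
  have hyB : ∀ σ ∈ Icc 0 τ, Θ σ y ∈ closedBall 0 R := by
    intro σ hσ
    have hσT : σ ∈ Icc 0 T := ⟨hσ.1, hσ.2.trans hτmem.2⟩
    have h1 := htraj σ hσT
    rw [mem_closedBall] at h1 ⊢
    have h2 := hdleτ σ hσ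
    calc dist (Θ σ y) 0 ≤ dist (Θ σ y) (Θ σ y₀) + dist (Θ σ y₀) 0 := dist_triangle _ _ _
      _ ≤ 1 + (R - 1) := add_le_add h2 h1
      _ = R := by ring
  -- Gronwall estimate up to time b, for any b ≤ τ-admissible data
  have gron : ∀ b ∈ Icc 0 T, (∀ σ ∈ Icc 0 b, Θ σ y ∈ closedBall 0 R) →
      ∀ s ∈ Icc 0 b, d s ≤ dist y y₀ * exp (L * s) := by
    intro b hb hmem s hs
    have := dist_le_of_trajectories_ODE_of_mem (v := fun _ z => G z)
      (s := fun _ => closedBall (0 : Esp n) R) (K := L)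
      (f := fun σ => Θ σ y) (g := fun σ => Θ σ y₀)
      (a := 0) (b := b) (δ := dist y y₀)
      (fun _ _ => hLip)
      ((hcont y).continuousOn)
      (fun t _ => (hΘ t y).hasDerivWithinAt)
      (fun t ht => hmem t ⟨ht.1, ht.2.le⟩)
      ((hcont y₀).continuousOn)
      (fun t _ => (hΘ t y₀).hasDerivWithinAt)
      (fun t ht => hy₀B t ⟨ht.1, ht.2.le.trans hb.2⟩)
      (le_of_eq (by show dist (Θ 0 y) (Θ 0 y₀) = dist y y₀; rw [hΘ0, hΘ0])) s hs
    simpa using this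
  -- conclude τ = T
  have hτT : τ = T := by
    by_contra hne
    have hτltT : τ < T := lt_of_le_of_ne hτmem.2 hne
    have hdτ : d τ ≤ 1 / 2 := by
      have h1 := gron τ hτmem hyB τ ⟨hτmem.1, le_refl _⟩
      have h2 : exp ((L : ℝ) * τ) ≤ exp ((L : ℝ) * T) :=
        exp_le_exp.2 (by nlinarith [hτmem.1, hτltT, L.coe_nonneg])
      have h3 : dist y y₀ * exp ((L:ℝ) * τ) ≤ exp (-((L:ℝ) * T)) / 2 * exp ((L:ℝ) * T) := by
        apply mul_le_mul hy h2 (exp_nonneg _) (by positivity)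
      have h4 : exp (-((L:ℝ) * T)) / 2 * exp ((L:ℝ) * T) = 1 / 2 := by
        rw [div_mul_eq_mul_div, ← exp_add]
        simp
      linarith
    -- d < 1 in a neighborhood of τ
    have hev : ∀ᶠ σ in nhds τ, d σ < 1 := by
      have : d τ < 1 := by linarith
      exact hdcont.continuousAt.eventually_lt continuousAt_const this
    obtain ⟨ε, hε, hball⟩ := Metric.eventually_nhds_iff.mp hev
    set s' := min T (τ + ε / 2) with hs'
    have hτs' : τ < s' := lt_min hτltT (by linarith)
    have hs'A : s' ∈ A := by
      refine ⟨⟨hτmem.1.trans hτs'.le, min_le_left _ _⟩, fun σ hσ => ?_⟩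
      rcases le_or_gt σ τ with h | h
      · exact hdleτ σ ⟨hσ.1, h⟩
      · apply le_of_lt
        apply hball
        have hσ2 : σ ≤ τ + ε / 2 := hσ.2.trans (min_le_right _ _)
        rw [Real.dist_eq, abs_lt]
        constructor <;> linarith
    have := le_csSup hbdd hs'A
    rw [← hτ] at this
    linarith
  intro s hs
  rw [← hτT] at hs
  exact ⟨hyB s hs, gron τ hτmem hyB s hs⟩


section Orb

variable {n : ℕ} {φ : ℝ → Esp n → Esp n} {x : Esp n} {P : ℝ}

/-- The (compact) orbit of `x` under `φ`. -/
def orbK (φ : ℝ → Esp n → Esp n) (x : Esp n) (P : ℝ) : Set (Esp n) :=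
  (fun r => φ r x) '' Icc 0 P

lemma x_mem_orbK (hP : 0 < P) (hφ0 : ∀ z, φ 0 z = z) : x ∈ orbK φ x P :=
  ⟨0, ⟨le_refl _, hP.le⟩, hφ0 x⟩

lemma orbK_compact (hc : Continuous (fun r => φ r x)) : IsCompact (orbK φ x P) :=
  isCompact_Icc.image hc

lemma orbK_inv (hP : 0 < P) (hφadd : ∀ s t z, φ (s + t) z = φ s (φ t z))
    (hper : ∀ t, φ (t + P) x = φ t x) :
    ∀ y ∈ orbK φ x P, ∀ s : ℝ, φ s y ∈ orbK φ x P := by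
  rintro y ⟨r, hr, rfl⟩ s
  have hq : φ s (φ r x) = φ (s + r) x := (hφadd s r x).symm
  rw [hq]
  set q := s + r with hqdef
  have hperiodic : Function.Periodic (fun t => φ t x) P := fun t => hper t
  have hmod : φ q x = φ (q - ⌊q / P⌋ * P) x := (hperiodic.sub_int_mul_eq ⌊q / P⌋).symm
  refine ⟨q - ⌊q / P⌋ * P, ⟨?_, ?_⟩, hmod.symm⟩
  · have := Int.sub_floor_div_mul_nonneg q hP
    linarith
  · have := Int.sub_floor_div_mul_lt q hP
    linarith

lemma exists_constants {F : Esp n → Esp n} (hF : ContDiff ℝ (⊤ : ℕ∞) F) {S : Set (Esp n)}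
    (hS : IsCompact S) :
    ∃ R α : ℝ, 1 ≤ α ∧ 1 ≤ R ∧ (∀ z ∈ S, z ∈ closedBall (0 : Esp n) (R - 1)) ∧
      LipschitzOnWith α.toNNReal F (closedBall 0 R) ∧
      (∀ z ∈ closedBall (0 : Esp n) R, ‖fderiv ℝ F z‖ ≤ α) := by
  obtain ⟨M0, hM0⟩ := hS.exists_bound_of_continuousOn continuous_id.continuousOn
  set R := max 1 (M0 + 1) with hR
  have hBcpt : IsCompact (closedBall (0 : Esp n) R) := isCompact_closedBall _ _
  have hdF : Continuous (fderiv ℝ F) :=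
    ((hF.fderiv_right (m := (⊤ : ℕ∞)) ((by simp))).continuous)
  obtain ⟨α0, hα0⟩ := hBcpt.exists_bound_of_continuousOn hdF.continuousOn
  set α := max 1 α0 with hα
  have hα1 : (1 : ℝ) ≤ α := le_max_left _ _
  have hαnn : (0 : ℝ) ≤ α := by linarith
  have hbound : ∀ z ∈ closedBall (0 : Esp n) R, ‖fderiv ℝ F z‖ ≤ α := fun z hz =>
    (hα0 z hz).trans (le_max_right _ _)
  refine ⟨R, α, hα1, le_max_left _ _, ?_, ?_, hbound⟩
  · intro z hz
    rw [mem_closedBall, dist_zero_right]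
    have h1 := hM0 z hz
    have h2 : M0 + 1 ≤ R := le_max_right _ _
    have h1' : ‖z‖ ≤ M0 := by simpa using h1
    linarith
  · apply Convex.lipschitzOnWith_of_nnnorm_fderiv_le
      (fun z _ => (hF.differentiable (by simp)).differentiableAt)
    · intro z hz
      have := hbound z hz
      rw [← norm_toNNReal]
      exact Real.toNNReal_le_toNNReal this
    · exact convex_closedBall _ _

lemma hasDerivWithinAt_omega0 {a b : ℝ → Esp n} {a' b' : Esp n} {s : Set ℝ} {σ : ℝ}
    (ha : HasDerivWithinAt a a' s σ) (hb : HasDerivWithinAt b b' s σ) :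
    HasDerivWithinAt (fun τ => omega0 (a τ) (b τ))
      (omega0 a' (b σ) + omega0 (a σ) b') s σ := by
  have h2 : ∀ i : Fin n, HasDerivWithinAt (fun τ => (a τ).2 i) (a'.2 i) s σ := fun i =>
    (((ContinuousLinearMap.proj i).comp
      (ContinuousLinearMap.snd ℝ (Fin n → ℝ) (Fin n → ℝ))).hasFDerivAt).comp_hasDerivWithinAt σ ha
  have h1 : ∀ i : Fin n, HasDerivWithinAt (fun τ => (a τ).1 i) (a'.1 i) s σ := fun i =>
    (((ContinuousLinearMap.proj i).comp
      (ContinuousLinearMap.fst ℝ (Fin n → ℝ) (Fin n → ℝ))).hasFDerivAt).comp_hasDerivWithinAt σ ha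
  have g2 : ∀ i : Fin n, HasDerivWithinAt (fun τ => (b τ).2 i) (b'.2 i) s σ := fun i =>
    (((ContinuousLinearMap.proj i).comp
      (ContinuousLinearMap.snd ℝ (Fin n → ℝ) (Fin n → ℝ))).hasFDerivAt).comp_hasDerivWithinAt σ hb
  have g1 : ∀ i : Fin n, HasDerivWithinAt (fun τ => (b τ).1 i) (b'.1 i) s σ := fun i =>
    (((ContinuousLinearMap.proj i).comp
      (ContinuousLinearMap.fst ℝ (Fin n → ℝ) (Fin n → ℝ))).hasFDerivAt).comp_hasDerivWithinAt σ hb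
  have hmain := HasDerivWithinAt.fun_sub
    (HasDerivWithinAt.fun_sum (u := Finset.univ) (fun i _ => ((h2 i).fun_mul (g1 i))))
    (HasDerivWithinAt.fun_sum (u := Finset.univ) (fun i _ => ((h1 i).fun_mul (g2 i))))
  convert hmain using 1
  · rfl
  · rfl
  · rfl
  simp only [omega0, Finset.sum_add_distrib]
  ring

end Orb

section Var

variable {n : ℕ} {H : Esp n → ℝ} {φ : ℝ → Esp n → Esp n} {x : Esp n} {P : ℝ}

set_option maxHeartbeats 1000000 in
lemma short_good (hH : ContDiff ℝ (⊤ : ℕ∞) H)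
    (hφ0 : ∀ z, φ 0 z = z)
    (hφadd : ∀ s t z, φ (s + t) z = φ s (φ t z))
    (hφflow : ∀ t z, HasDerivAt (fun τ => φ τ z) (hamVF H (φ t z)) t)
    (hP : 0 < P) (hper : ∀ t, φ (t + P) x = φ t x) :
    ∃ h : ℝ, 0 < h ∧ ∀ s ∈ Icc 0 h, ∀ y ∈ orbK φ x P,
      ∃ M : Esp n →L[ℝ] Esp n, HasFDerivAt (φ s) M y ∧
        ∀ u v, omega0 (M u) (M v) = omega0 u v := by
  have hFc : ContDiff ℝ (⊤ : ℕ∞) (hamVF H) := contDiff_hamVF hH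
  have hFdiff : ∀ z, DifferentiableAt ℝ (hamVF H) z := fun z =>
    (hFc.differentiable (by simp) z)
  have hdFc : Continuous (fderiv ℝ (hamVF H)) :=
    (hFc.fderiv_right (m := (⊤ : ℕ∞)) (by simp)).continuous
  have hcont : ∀ z, Continuous fun r => φ r z := fun z =>
    continuous_iff_continuousAt.2 fun t => (hφflow t z).continuousAt
  have hK : IsCompact (orbK φ x P) := orbK_compact (hcont x)
  obtain ⟨R, α, hα1, hR1, hKB, hLip, hdFb⟩ := exists_constants hFc hK
  have hα0 : (0:ℝ) < α := lt_of_lt_of_le one_pos hα1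
  have hαco : ((α.toNNReal : ℝ≥0) : ℝ) = α := Real.coe_toNNReal _ hα0.le
  set h := 1 / (2 * α) with hh
  have hhpos : 0 < h := by positivity
  refine ⟨h, hhpos, ?_⟩
  intro s hs y hy
  set A : ℝ → (Esp n →L[ℝ] Esp n) := fun σ => fderiv ℝ (hamVF H) (φ σ y) with hA
  have hKinv := orbK_inv hP hφadd hper
  have hyK : ∀ σ : ℝ, φ σ y ∈ orbK φ x P := fun σ => hKinv y hy σ
  have hyB1 : ∀ σ : ℝ, φ σ y ∈ closedBall (0 : Esp n) (R - 1) := fun σ => hKB _ (hyK σ)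
  have hyB : ∀ σ : ℝ, φ σ y ∈ closedBall (0 : Esp n) R := fun σ => by
    have := hyB1 σ
    rw [mem_closedBall] at this ⊢
    linarith
  have hAb : ∀ σ, ‖A σ‖ ≤ α := fun σ => hdFb _ (hyB σ)
  have hAnn : ∀ σ, ‖A σ‖₊ ≤ α.toNNReal := fun σ => by
    rw [← norm_toNNReal]; exact Real.toNNReal_le_toNNReal (hAb σ)
  have hAc : Continuous A := hdFc.comp (hcont y)
  -- Picard–Lindelöf for the variational (linear) equation
  have hPL : IsPicardLindelof (fun σ (Wc : Esp n →L[ℝ] Esp n) => (A σ).comp Wc)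
      (⟨0, le_refl _, hhpos.le⟩ : Icc (0:ℝ) h) (ContinuousLinearMap.id ℝ (Esp n)) 1 0
        (2*α).toNNReal α.toNNReal := by
    refine ⟨?_, ?_, ?_, ?_⟩
    · intro σ _
      apply LipschitzWith.lipschitzOnWith
      apply LipschitzWith.of_dist_le_mul
      intro Wc Wc'
      rw [dist_eq_norm, dist_eq_norm, ← ContinuousLinearMap.comp_sub]
      calc ‖(A σ).comp (Wc - Wc')‖ ≤ ‖A σ‖ * ‖Wc - Wc'‖ :=
            ContinuousLinearMap.opNorm_comp_le _ _
        _ ≤ (α.toNNReal : ℝ) * ‖Wc - Wc'‖ := by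
            rw [hαco]
            exact mul_le_mul_of_nonneg_right (hAb σ) (norm_nonneg _)
    · intro Wc _
      exact (hAc.clm_comp continuous_const).continuousOn
    · intro σ _ Wc hWc
      have h1 : ‖Wc‖ ≤ 2 := by
        have h2 : ‖Wc - ContinuousLinearMap.id ℝ (Esp n)‖ ≤ 1 := by
          rw [← dist_eq_norm]; simpa using mem_closedBall.1 hWc
        have h3 : ‖(ContinuousLinearMap.id ℝ (Esp n) : Esp n →L[ℝ] Esp n)‖ ≤ 1 :=
          ContinuousLinearMap.norm_id_le
        calc ‖Wc‖ = ‖(Wc - ContinuousLinearMap.id ℝ (Esp n)) + ContinuousLinearMap.id ℝ (Esp n)‖ := by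
              congr 1; abel
          _ ≤ ‖Wc - ContinuousLinearMap.id ℝ (Esp n)‖ + ‖(ContinuousLinearMap.id ℝ (Esp n) : Esp n →L[ℝ] Esp n)‖ := norm_add_le _ _
          _ ≤ 2 := by linarith
      calc ‖(A σ).comp Wc‖ ≤ ‖A σ‖ * ‖Wc‖ := ContinuousLinearMap.opNorm_comp_le _ _
        _ ≤ α * 2 := mul_le_mul (hAb σ) h1 (norm_nonneg _) hα0.le
        _ = 2 * α := by ring
        _ ≤ ((2*α).toNNReal : ℝ) := Real.le_coe_toNNReal _
    · have h2 : (2*α) * h = 1 := by rw [hh, mul_one_div, div_self (by positivity)]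
      have h3 : ((2*α).toNNReal : ℝ) = 2*α := Real.coe_toNNReal _ (by positivity)
      dsimp only
      simp only [h3, sub_zero, max_eq_left hhpos.le, NNReal.coe_one, tsub_zero, NNReal.coe_zero]
      rw [h2]
  obtain ⟨W, hW0, hWd⟩ :=
    hPL.exists_eq_forall_mem_Icc_hasDerivWithinAt₀
  change W 0 = ContinuousLinearMap.id ℝ (Esp n) at hW0
  have hWu : ∀ (u : Esp n), ∀ σ ∈ Icc 0 h,
      HasDerivWithinAt (fun τ => W τ u) ((A σ) (W σ u)) (Icc 0 h) σ := by
    intro u σ hσ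
    have := (hWd σ hσ).clm_apply (hasDerivWithinAt_const σ (Icc 0 h) u)
    simpa using this
  -- symplecticity of W s
  have hsymp : ∀ u v, omega0 (W s u) (W s v) = omega0 u v := by
    intro u v
    have hf : ∀ σ ∈ Icc 0 h, HasDerivWithinAt (fun τ => omega0 (W τ u) (W τ v))
        (omega0 ((A σ) (W σ u)) (W σ v) + omega0 (W σ u) ((A σ) (W σ v))) (Icc 0 h) σ :=
      fun σ hσ => hasDerivWithinAt_omega0 (hWu u σ hσ) (hWu v σ hσ)
    have hcontf : ContinuousOn (fun τ => omega0 (W τ u) (W τ v)) (Icc 0 h) :=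
      fun σ hσ => (hf σ hσ).continuousWithinAt
    have hzero : ∀ σ ∈ Ico 0 h,
        HasDerivWithinAt (fun τ => omega0 (W τ u) (W τ v)) 0 (Ici σ) σ := by
      intro σ hσ
      have h1 := (hf σ (Ico_subset_Icc_self hσ)).mono_of_mem_nhdsWithin
        (Icc_mem_nhdsGE_of_mem hσ)
      have h2 : omega0 ((A σ) (W σ u)) (W σ v) + omega0 (W σ u) ((A σ) (W σ v)) = 0 :=
        isymp hH (φ σ y) (W σ u) (W σ v)
      rwa [h2] at h1
    have := constant_of_has_deriv_right_zero hcontf hzero s hs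
    simpa [hW0] using this
  -- differentiability of φ s at y with derivative W s
  have hdiffW : HasFDerivAt (φ s) (W s) y := by
    rw [hasFDerivAt_iff_isLittleO, Asymptotics.isLittleO_iff]
    intro c hc
    set Cb := exp (α * h) with hCb
    have hCbpos : 0 < Cb := exp_pos _
    have hCb1 : 1 ≤ Cb := by
      rw [hCb, ← Real.exp_zero]
      exact exp_le_exp.2 (by positivity)
    set ε := c / (Cb * Cb + 1) with hε
    have hεpos : 0 < ε := by positivity
    obtain ⟨δ₁, hδ₁pos, hδ₁⟩ := (Metric.uniformContinuousOn_iff_le.1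
      ((isCompact_closedBall (0 : Esp n) R).uniformContinuousOn_of_continuous
        hdFc.continuousOn)) ε hεpos
    set r₀ := min (exp (-(α * h)) / 2) (exp (-(α * h)) * min δ₁ 1 / 2) with hr₀
    have hr₀pos : 0 < r₀ := by
      apply lt_min <;> positivity
    filter_upwards [Metric.ball_mem_nhds y hr₀pos] with y' hy'
    have hy'r : dist y' y < r₀ := mem_ball.1 hy'
    -- trap the trajectory of y'
    have htrap := flow_trap hφflow hφ0 hLip hhpos.le
      (fun σ hσ => hyB1 σ) (y := y')
      (by rw [hαco]; exact (hy'r.le.trans (min_le_left _ _)))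
    -- the quantitative smallness
    have hsegsmall : ∀ σ ∈ Icc (0:ℝ) h, dist (φ σ y') (φ σ y) ≤ min δ₁ 1 / 2 := by
      intro σ hσ
      have h1 := (htrap σ hσ).2
      have h2 : exp ((α.toNNReal : ℝ) * σ) ≤ exp (α * h) := by
        rw [hαco]
        exact exp_le_exp.2 (mul_le_mul_of_nonneg_left hσ.2 hα0.le)
      have h3 : dist y' y * exp ((α.toNNReal:ℝ) * σ) ≤
          (exp (-(α * h)) * min δ₁ 1 / 2) * exp (α * h) := by
        apply mul_le_mul (hy'r.le.trans (min_le_right _ _)) h2 (exp_nonneg _) (by positivity)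
      have h4 : (exp (-(α * h)) * min δ₁ 1 / 2) * exp (α * h) = min δ₁ 1 / 2 := by
        rw [div_mul_eq_mul_div, mul_comm, ← mul_assoc, ← exp_add]
        simp
      linarith
    -- Gronwall comparison of θ with 0
    set εf := ε * (dist y' y * Cb) with hεf
    have key := dist_le_of_approx_trajectories_ODE (E := Esp n)
      (v := fun σ z => A σ z) (K := α.toNNReal)
      (f := fun σ => φ σ y' - φ σ y - W σ (y' - y))
      (f' := fun σ => hamVF H (φ σ y') - hamVF H (φ σ y) - (A σ) (W σ (y' - y)))
      (g := fun _ => (0 : Esp n)) (g' := fun _ => (0 : Esp n))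
      (εf := εf) (εg := 0) (δ := 0) (a := 0) (b := s)
      (fun t => ((A t).lipschitz).weaken (hAnn t))
      (by
        intro σ hσ
        have hσh : σ ∈ Icc 0 h := ⟨hσ.1, hσ.2.trans hs.2⟩
        exact (((hcont y').continuousWithinAt).sub ((hcont y).continuousWithinAt)).sub
          ((hWu (y' - y) σ hσh).continuousWithinAt.mono (Icc_subset_Icc (le_refl _) hs.2)))
      (by
        intro σ hσ
        have hσh : σ ∈ Ico 0 h := ⟨hσ.1, lt_of_lt_of_le hσ.2 hs.2⟩
        have h3 : HasDerivWithinAt (fun τ => W τ (y' - y)) ((A σ) (W σ (y' - y))) (Ici σ) σ :=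
          (hWu (y' - y) σ (Ico_subset_Icc_self hσh)).mono_of_mem_nhdsWithin
            (Icc_mem_nhdsGE_of_mem hσh)
        exact (((hφflow σ y').hasDerivWithinAt).sub ((hφflow σ y).hasDerivWithinAt)).sub h3)
      (by
        -- f_bound via the mean value inequality
        intro σ hσ
        have hσh : σ ∈ Icc 0 h := ⟨hσ.1, (hσ.2.le.trans hs.2)⟩
        have haB : φ σ y ∈ closedBall (0 : Esp n) R := hyB σ
        have hsmall := hsegsmall σ hσh
        have hba : ‖φ σ y' - φ σ y‖ ≤ min δ₁ 1 / 2 := by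
          rw [← dist_eq_norm]; exact hsmall
        have hδhalf : min δ₁ 1 / 2 < δ₁ := by
          have := min_le_left δ₁ 1
          have h01 : (0:ℝ) < δ₁ := hδ₁pos
          have := min_le_right δ₁ 1
          have hminpos : 0 < min δ₁ 1 := lt_min hδ₁pos one_pos
          nlinarith [min_le_left δ₁ 1]
        -- the convex set S
        set S := closedBall (φ σ y) ‖φ σ y' - φ σ y‖ with hS
        have hSB : ∀ z ∈ S, z ∈ closedBall (0 : Esp n) R := by
          intro z hz
          rw [mem_closedBall] at hz ⊢
          have h5 : dist (φ σ y) 0 ≤ R - 1 := mem_closedBall.1 (hyB1 σ)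
          have h6 : ‖φ σ y' - φ σ y‖ ≤ 1 := hba.trans (by
            have : min δ₁ 1 ≤ 1 := min_le_right _ _
            linarith)
          calc dist z 0 ≤ dist z (φ σ y) + dist (φ σ y) 0 := dist_triangle _ _ _
            _ ≤ ‖φ σ y' - φ σ y‖ + (R - 1) := add_le_add hz h5
            _ ≤ R := by linarith
        have hmv := (convex_closedBall (φ σ y) ‖φ σ y' - φ σ y‖).norm_image_sub_le_of_norm_hasFDerivWithin_le
          (f := fun z => hamVF H z - A σ z)
          (f' := fun z => fderiv ℝ (hamVF H) z - A σ) (C := ε)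
          (fun z hz => (((hFdiff z).hasFDerivAt).sub ((A σ).hasFDerivAt)).hasFDerivWithinAt)
          (fun z hz => by
            have hzB := hSB z hz
            have hdza : dist z (φ σ y) ≤ ‖φ σ y' - φ σ y‖ := mem_closedBall.1 hz
            have hlt : dist z (φ σ y) < δ₁ := lt_of_le_of_lt (hdza.trans hba) hδhalf
            have := hδ₁ z hzB (φ σ y) haB hlt.le
            rwa [dist_eq_norm] at this)
          (mem_closedBall_self (norm_nonneg _))
          (mem_closedBall.2 (by rw [dist_eq_norm]))
        -- rewrite the mean value inequality
        have heq : (hamVF H (φ σ y') - A σ (φ σ y')) - (hamVF H (φ σ y) - A σ (φ σ y))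
            = hamVF H (φ σ y') - hamVF H (φ σ y) - (A σ) (φ σ y' - φ σ y) := by
          rw [map_sub]; abel
        rw [heq] at hmv
        have hθeq : hamVF H (φ σ y') - hamVF H (φ σ y) - (A σ) (W σ (y' - y)) -
            (A σ) (φ σ y' - φ σ y - W σ (y' - y))
            = hamVF H (φ σ y') - hamVF H (φ σ y) - (A σ) (φ σ y' - φ σ y) := by
          simp only [map_sub]; abel
        rw [dist_eq_norm, hθeq]
        refine hmv.trans ?_
        rw [hεf]
        have h7 : ‖φ σ y' - φ σ y‖ ≤ dist y' y * Cb := by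
          rw [← dist_eq_norm]
          refine ((htrap σ hσh).2).trans ?_
          apply mul_le_mul_of_nonneg_left _ dist_nonneg
          rw [hαco, hCb]
          exact exp_le_exp.2 (mul_le_mul_of_nonneg_left hσh.2 hα0.le)
        exact mul_le_mul_of_nonneg_left h7 hεpos.le)
      (continuousOn_const)
      (fun σ _ => hasDerivWithinAt_const _ _ _)
      (fun σ _ => by simp)
      (by
        have hz : φ 0 y' - φ 0 y - W 0 (y' - y) = 0 := by
          simp [hφ0, hW0]
        exact dist_le_zero.2 hz)
    have hkey := key s ⟨hs.1, le_refl _⟩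
    rw [gronwallBound_of_K_ne_0 (by rw [hαco]; exact hα0.ne')] at hkey
    simp only [zero_mul, zero_add, add_zero, sub_zero] at hkey
    have hgb : εf / (α.toNNReal : ℝ) * (exp ((α.toNNReal:ℝ) * s) - 1) ≤ εf * Cb := by
      rw [hαco]
      have hεfnn : 0 ≤ εf := by
        rw [hεf]; positivity
      have h8 : exp (α * s) - 1 ≤ Cb := by
        rw [hCb]
        have : exp (α * s) ≤ exp (α * h) :=
          exp_le_exp.2 (mul_le_mul_of_nonneg_left hs.2 hα0.le)
        linarith
      have h9 : εf / α ≤ εf := by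
        rw [div_le_iff₀ hα0]
        nlinarith
      calc εf / α * (exp (α * s) - 1) ≤ εf / α * Cb := by
            apply mul_le_mul_of_nonneg_left h8 (by positivity)
        _ ≤ εf * Cb := mul_le_mul_of_nonneg_right h9 hCbpos.le
      
    have hfinal : ‖φ s y' - φ s y - W s (y' - y)‖ ≤ εf * Cb := by
      have := hkey.trans hgb
      rwa [dist_zero_right] at this
    refine hfinal.trans ?_
    rw [hεf, hε, dist_eq_norm]
    have hD : (0:ℝ) < Cb * Cb + 1 := by positivity
    have hrw : c / (Cb * Cb + 1) * (‖y' - y‖ * Cb) * Cb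
        = c * ‖y' - y‖ * (Cb * Cb) / (Cb * Cb + 1) := by ring
    rw [hrw, div_le_iff₀ hD]
    have hrw2 : c * ‖y' - y‖ * (Cb * Cb + 1) = c * ‖y' - y‖ * (Cb * Cb) + c * ‖y' - y‖ := by
      ring
    rw [hrw2]
    have hcn : 0 ≤ c * ‖y' - y‖ := mul_nonneg hc.le (norm_nonneg _)
    linarith
  exact ⟨W s, hdiffW, hsymp⟩

lemma good_all (hH : ContDiff ℝ (⊤ : ℕ∞) H)
    (hφ0 : ∀ z, φ 0 z = z)
    (hφadd : ∀ s t z, φ (s + t) z = φ s (φ t z))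
    (hφflow : ∀ t z, HasDerivAt (fun τ => φ τ z) (hamVF H (φ t z)) t)
    (hP : 0 < P) (hper : ∀ t, φ (t + P) x = φ t x) :
    ∀ s : ℝ, 0 ≤ s → ∀ y ∈ orbK φ x P, ∃ M : Esp n →L[ℝ] Esp n,
      HasFDerivAt (φ s) M y ∧ ∀ u v, omega0 (M u) (M v) = omega0 u v := by
  obtain ⟨h, hpos, hgood⟩ := short_good hH hφ0 hφadd hφflow hP hper
  have hKinv := orbK_inv hP hφadd hper
  -- step: compose a good time with a short good time
  have hstep : ∀ s' : ℝ,
      (∀ y ∈ orbK φ x P, ∃ M : Esp n →L[ℝ] Esp n, HasFDerivAt (φ s') M y ∧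
        ∀ u v, omega0 (M u) (M v) = omega0 u v) →
      ∀ y ∈ orbK φ x P, ∃ M : Esp n →L[ℝ] Esp n, HasFDerivAt (φ (h + s')) M y ∧
        ∀ u v, omega0 (M u) (M v) = omega0 u v := by
    intro s' hgood' y hy
    obtain ⟨M₁, hM₁, hsymp₁⟩ := hgood' y hy
    obtain ⟨M₂, hM₂, hsymp₂⟩ := hgood h ⟨hpos.le, le_refl _⟩ (φ s' y) (hKinv y hy s')
    have heqfun : φ (h + s') = fun z => φ h (φ s' z) := funext fun z => hφadd h s' z
    refine ⟨M₂.comp M₁, ?_, ?_⟩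
    · rw [heqfun]
      exact HasFDerivAt.comp y hM₂ hM₁
    · intro u v
      simp only [ContinuousLinearMap.comp_apply]
      rw [hsymp₂, hsymp₁]
  have hind : ∀ m : ℕ, ∀ s : ℝ, 0 ≤ s → s ≤ ((m : ℝ) + 1) * h →
      ∀ y ∈ orbK φ x P, ∃ M : Esp n →L[ℝ] Esp n, HasFDerivAt (φ s) M y ∧
        ∀ u v, omega0 (M u) (M v) = omega0 u v := by
    intro m
    induction m with
    | zero =>
      intro s h0 h1
      exact hgood s ⟨h0, by simpa using h1⟩
    | succ k ih =>
      intro s h0 h1 y hy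
      rcases le_or_gt s (((k : ℝ) + 1) * h) with hle | hgt
      · exact ih s h0 hle y hy
      · have hs'0 : 0 ≤ s - h := by nlinarith [Nat.cast_nonneg (α := ℝ) k]
        have hs'le : s - h ≤ ((k : ℝ) + 1) * h := by
          push_cast at h1
          nlinarith
        have heq : s = h + (s - h) := by ring
        rw [heq]
        exact hstep (s - h) (fun y' hy' => ih (s - h) hs'0 hs'le y' hy') y hy
  intro s hs0 y hy
  obtain ⟨m, hm⟩ := exists_nat_gt (s / h)
  have hsle : s ≤ ((m : ℝ) + 1) * h := by
    have h1 : s < (m : ℝ) * h := by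
      rw [div_lt_iff₀ hpos] at hm
      linarith
    nlinarith
  exact hind m s hs0 hsle y hy

lemma equivariance
    (hφ0 : ∀ z, φ 0 z = z)
    (hφadd : ∀ s t z, φ (s + t) z = φ s (φ t z))
    (hφflow : ∀ t z, HasDerivAt (fun τ => φ τ z) (hamVF H (φ t z)) t)
    {s : ℝ} {y : Esp n} {M : Esp n →L[ℝ] Esp n} (hM : HasFDerivAt (φ s) M y) :
    M (hamVF H y) = hamVF H (φ s y) := by
  have h1 : HasDerivAt (fun σ : ℝ => φ (s + σ) y) (hamVF H (φ (s + 0) y)) 0 := by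
    have hg := hφflow (s + 0) y
    have hh : HasDerivAt (fun σ : ℝ => s + σ) 1 0 := by
      simpa using (hasDerivAt_id (0:ℝ)).const_add s
    have := HasDerivAt.scomp (0:ℝ) hg hh
    simpa [Function.comp_def] using this
  have hM' : HasFDerivAt (φ s) M (φ 0 y) := by rw [hφ0]; exact hM
  have h2 : HasDerivAt (fun σ : ℝ => φ s (φ σ y)) (M (hamVF H (φ 0 y))) 0 :=
    HasFDerivAt.comp_hasDerivAt 0 hM' (hφflow 0 y)
  have heqfun : (fun σ : ℝ => φ (s + σ) y) = (fun σ : ℝ => φ s (φ σ y)) :=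
    funext fun σ => hφadd s σ y
  rw [heqfun] at h1
  have := h2.unique h1
  rw [hφ0] at this
  rw [this, add_zero]

set_option maxHeartbeats 1000000 in
lemma joint_diff (hH : ContDiff ℝ (⊤ : ℕ∞) H)
    (hφ0 : ∀ z, φ 0 z = z)
    (hφadd : ∀ s t z, φ (s + t) z = φ s (φ t z))
    (hφflow : ∀ t z, HasDerivAt (fun τ => φ τ z) (hamVF H (φ t z)) t)
    (hP : 0 < P) (hper : ∀ t, φ (t + P) x = φ t x)
    {z₀ : Esp n} (hz₀ : z₀ ∈ orbK φ x P) :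
    HasFDerivAt (fun p : ℝ × Esp n => φ p.1 p.2)
      ((ContinuousLinearMap.fst ℝ ℝ (Esp n)).smulRight (hamVF H z₀)
        + ContinuousLinearMap.snd ℝ ℝ (Esp n)) (0, z₀) := by
  have hFc : ContDiff ℝ (⊤ : ℕ∞) (hamVF H) := contDiff_hamVF hH
  have hcont : ∀ z, Continuous fun r => φ r z := fun z =>
    continuous_iff_continuousAt.2 fun t => (hφflow t z).continuousAt
  have hK : IsCompact (orbK φ x P) := orbK_compact (hcont x)
  obtain ⟨R, α, hα1, hR1, hKB, hLip, hdFb⟩ := exists_constants hFc hK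
  have hα0 : (0:ℝ) < α := lt_of_lt_of_le one_pos hα1
  have hαco : ((α.toNNReal : ℝ≥0) : ℝ) = α := Real.coe_toNNReal _ hα0.le
  have hKinv := orbK_inv hP hφadd hper
  have hz₀K : ∀ σ : ℝ, φ σ z₀ ∈ orbK φ x P := fun σ => hKinv z₀ hz₀ σ
  have hz₀B1 : ∀ σ : ℝ, φ σ z₀ ∈ closedBall (0 : Esp n) (R - 1) := fun σ => hKB _ (hz₀K σ)
  -- reversed flow
  have hrevflow : ∀ (t : ℝ) (z : Esp n),
      HasDerivAt (fun τ => φ (-τ) z) (-(hamVF H (φ (-t) z))) t := by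
    intro t z
    have hg := hφflow (-t) z
    have hh : HasDerivAt (fun τ : ℝ => -τ) (-1) t := by
      simpa using (hasDerivAt_neg' (x := t))
    have := HasDerivAt.scomp t hg hh
    simpa [Function.comp_def] using this
  have hrev0 : ∀ z : Esp n, φ (-(0:ℝ)) z = z := fun z => by rw [neg_zero]; exact hφ0 z
  have hLipneg : LipschitzOnWith α.toNNReal (fun z => -(hamVF H z)) (closedBall 0 R) := by
    intro a ha b hb
    have := hLip ha hb
    simpa [edist_neg_neg] using this
  -- two-sided trap around z₀ with horizon 1
  set E := exp α with hE
  have hEpos : 0 < E := exp_pos _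
  have htrapfwd := fun (z : Esp n) (hz : dist z z₀ ≤ exp (-(α * 1)) / 2) =>
    flow_trap hφflow hφ0 hLip zero_le_one (fun σ hσ => hz₀B1 σ) (y := z)
      (by rw [hαco]; exact hz)
  have htrapbwd := fun (z : Esp n) (hz : dist z z₀ ≤ exp (-(α * 1)) / 2) =>
    flow_trap hrevflow hrev0 hLipneg zero_le_one (fun σ hσ => hz₀B1 (-σ)) (y := z)
      (by rw [hαco]; exact hz)
  have htrap2 : ∀ z : Esp n, dist z z₀ ≤ exp (-(α * 1)) / 2 → ∀ σ : ℝ, |σ| ≤ 1 →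
      φ σ z ∈ closedBall (0 : Esp n) R ∧ dist (φ σ z) (φ σ z₀) ≤ dist z z₀ * E := by
    intro z hz σ hσ
    rcases le_or_gt 0 σ with h0 | h0
    · have := (htrapfwd z hz) σ ⟨h0, (abs_of_nonneg h0) ▸ hσ⟩
      refine ⟨this.1, this.2.trans ?_⟩
      apply mul_le_mul_of_nonneg_left _ dist_nonneg
      rw [hαco, hE]
      apply exp_le_exp.2
      calc α * σ ≤ α * 1 := mul_le_mul_of_nonneg_left ((abs_of_nonneg h0) ▸ hσ) hα0.le
        _ = α := mul_one α
    · have hmσ : -σ ∈ Icc (0:ℝ) 1 := ⟨by linarith, (abs_of_neg h0) ▸ hσ⟩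
      have := (htrapbwd z hz) (-σ) hmσ
      rw [neg_neg] at this
      refine ⟨this.1, this.2.trans ?_⟩
      apply mul_le_mul_of_nonneg_left _ dist_nonneg
      rw [hαco, hE]
      apply exp_le_exp.2
      calc α * -σ ≤ α * 1 := mul_le_mul_of_nonneg_left ((abs_of_neg h0) ▸ hσ) hα0.le
        _ = α := mul_one α
  -- now the little-o estimate
  rw [hasFDerivAt_iff_isLittleO, Asymptotics.isLittleO_iff]
  intro c hc
  -- continuity of σ ↦ F (φ σ z₀) at 0
  have hFcont0 : ContinuousAt (fun σ : ℝ => hamVF H (φ σ z₀)) 0 :=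
    (hFc.continuous.comp (hcont z₀)).continuousAt
  have hev : ∀ᶠ σ : ℝ in nhds 0, ‖hamVF H (φ σ z₀) - hamVF H z₀‖ < c / 2 := by
    have h1 : Filter.Tendsto (fun σ : ℝ => hamVF H (φ σ z₀)) (nhds 0) (nhds (hamVF H z₀)) := by
      have h := hFcont0
      unfold ContinuousAt at h
      rwa [show (fun σ : ℝ => hamVF H (φ σ z₀)) 0 = hamVF H z₀ by simp [hφ0]] at h
    have h2 := Metric.tendsto_nhds.1 h1 (c/2) (by positivity)
    filter_upwards [h2] with σ hσ
    rwa [dist_eq_norm] at hσ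
  obtain ⟨δ₂, hδ₂pos, hδ₂⟩ := Metric.eventually_nhds_iff.mp hev
  set r := min (min 1 δ₂) (min (exp (-(α * 1)) / 2) (c / (2 * α * E))) with hr
  have hrpos : 0 < r :=
    lt_min (lt_min one_pos hδ₂pos) (lt_min (by positivity) (by positivity))
  filter_upwards [Metric.ball_mem_nhds ((0:ℝ), z₀) hrpos] with p hp
  obtain ⟨τ, z⟩ := p
  have hdist : dist ((τ, z) : ℝ × Esp n) ((0:ℝ), z₀) < r := mem_ball.1 hp
  have hτr : |τ| < r := by
    have h1 : dist τ (0:ℝ) ≤ dist ((τ, z) : ℝ × Esp n) ((0:ℝ), z₀) := by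
      rw [Prod.dist_eq]; exact le_max_left _ _
    rw [Real.dist_eq, sub_zero] at h1
    exact lt_of_le_of_lt h1 hdist
  have hzr : dist z z₀ < r := by
    refine lt_of_le_of_lt ?_ hdist
    rw [Prod.dist_eq]; exact le_max_right _ _
  have hτ1 : |τ| ≤ 1 := hτr.le.trans ((min_le_left _ _).trans (min_le_left _ _))
  have hτδ₂ : |τ| < δ₂ := lt_of_lt_of_le hτr ((min_le_left _ _).trans (min_le_right _ _))
  have hzsmall : dist z z₀ ≤ exp (-(α * 1)) / 2 :=
    hzr.le.trans ((min_le_right _ _).trans (min_le_left _ _))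
  have hzc : dist z z₀ ≤ c / (2 * α * E) :=
    hzr.le.trans ((min_le_right _ _).trans (min_le_right _ _))
  have htrapz := htrap2 z hzsmall
  set C := α * (dist z z₀ * E) + c / 2 with hC
  have hderiv : ∀ σ : ℝ, HasDerivAt (fun σ' => φ σ' z - σ' • hamVF H z₀)
      (hamVF H (φ σ z) - hamVF H z₀) σ := by
    intro σ
    have h2 : HasDerivAt (fun σ' : ℝ => σ' • hamVF H z₀) ((1:ℝ) • hamVF H z₀) σ :=
      (hasDerivAt_id σ).smul_const _
    simpa using (hφflow σ z).fun_sub h2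
  have hboundC : ∀ σ : ℝ, |σ| ≤ |τ| → ‖hamVF H (φ σ z) - hamVF H z₀‖ ≤ C := by
    intro σ hσcreated
    have hσ1 : |σ| ≤ 1 := hσcreated.trans hτ1
    obtain ⟨hmem, hd⟩ := htrapz σ hσ1
    have hφσz₀B : φ σ z₀ ∈ closedBall (0:Esp n) R := by
      have := hz₀B1 σ
      rw [mem_closedBall] at this ⊢
      linarith
    have hb1 : dist (hamVF H (φ σ z)) (hamVF H (φ σ z₀)) ≤ α * (dist z z₀ * E) := by
      have h3 := hLip.dist_le_mul _ hmem _ hφσz₀B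
      rw [hαco] at h3
      exact h3.trans (mul_le_mul_of_nonneg_left hd hα0.le)
    have hb2 : ‖hamVF H (φ σ z₀) - hamVF H z₀‖ ≤ c / 2 := by
      apply le_of_lt
      apply hδ₂
      rw [Real.dist_eq, sub_zero]
      exact lt_of_le_of_lt hσcreated hτδ₂
    calc ‖hamVF H (φ σ z) - hamVF H z₀‖
        ≤ ‖hamVF H (φ σ z) - hamVF H (φ σ z₀)‖ + ‖hamVF H (φ σ z₀) - hamVF H z₀‖ := by
          have : hamVF H (φ σ z) - hamVF H z₀
              = (hamVF H (φ σ z) - hamVF H (φ σ z₀)) + (hamVF H (φ σ z₀) - hamVF H z₀) := by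
            abel
          rw [this]
          exact norm_add_le _ _
      _ ≤ α * (dist z z₀ * E) + c / 2 := by
          rw [← dist_eq_norm] at *
          exact add_le_add hb1 hb2
      _ = C := hC.symm
  have hmain : ‖φ τ z - z - τ • hamVF H z₀‖ ≤ C * |τ| := by
    rcases le_or_gt 0 τ with h0 | h0
    · have hmv := norm_image_sub_le_of_norm_deriv_le_segment'
        (f := fun σ' => φ σ' z - σ' • hamVF H z₀)
        (f' := fun σ => hamVF H (φ σ z) - hamVF H z₀) (a := 0) (b := τ) (C := C)
        (fun σ _ => (hderiv σ).hasDerivWithinAt)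
        (fun σ hσ => hboundC σ (by
          rw [abs_of_nonneg hσ.1, abs_of_nonneg h0]
          exact hσ.2.le))
        τ ⟨h0, le_refl _⟩
      simp only [zero_smul, sub_zero, hφ0] at hmv
      have hre : φ τ z - τ • hamVF H z₀ - z = φ τ z - z - τ • hamVF H z₀ := by abel
      rw [hre] at hmv
      rw [abs_of_nonneg h0]
      exact hmv
    · have hderivrev : ∀ σ : ℝ, HasDerivAt (fun σ' => φ (-σ') z + σ' • hamVF H z₀)
          (hamVF H z₀ - hamVF H (φ (-σ) z)) σ := by
        intro σ
        have h1 := hderiv (-σ)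
        have hh : HasDerivAt (fun σ' : ℝ => -σ') (-1 : ℝ) σ := by
          simpa using (hasDerivAt_neg' (x := σ))
        have h2 := HasDerivAt.scomp σ h1 hh
        simpa [Function.comp_def] using h2
      have hmv := norm_image_sub_le_of_norm_deriv_le_segment'
        (f := fun σ' => φ (-σ') z + σ' • hamVF H z₀)
        (f' := fun σ => hamVF H z₀ - hamVF H (φ (-σ) z)) (a := 0) (b := -τ) (C := C)
        (fun σ _ => (hderivrev σ).hasDerivWithinAt)
        (fun σ hσ => by
          rw [norm_sub_rev]
          apply hboundC (-σ)
          rw [abs_neg, abs_of_nonneg hσ.1, abs_of_neg h0]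
          exact hσ.2.le)
        (-τ) ⟨by linarith, le_refl _⟩
      simp only [neg_neg, neg_zero, zero_smul, add_zero, neg_smul, hφ0] at hmv
      have hre : φ τ z + -(τ • hamVF H z₀) - z = φ τ z - z - τ • hamVF H z₀ := by abel
      rw [hre] at hmv
      rw [abs_of_neg h0]
      rw [sub_zero] at hmv
      exact hmv
  -- assemble
  have hCc : C ≤ c := by
    rw [hC]
    have h1 : α * (dist z z₀ * E) ≤ α * ((c / (2 * α * E)) * E) := by
      apply mul_le_mul_of_nonneg_left _ hα0.le
      exact mul_le_mul_of_nonneg_right hzc hEpos.le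
    have h2 : α * ((c / (2 * α * E)) * E) = c / 2 := by
      field_simp
    linarith
  have happ : ((ContinuousLinearMap.fst ℝ ℝ (Esp n)).smulRight (hamVF H z₀)
      + ContinuousLinearMap.snd ℝ ℝ (Esp n)) ((τ, z) - ((0:ℝ), z₀)) = τ • hamVF H z₀ + (z - z₀) := by
    simp [ContinuousLinearMap.smulRight_apply]
  rw [happ]
  have hexpr : φ τ z - φ 0 z₀ - (τ • hamVF H z₀ + (z - z₀)) = φ τ z - z - τ • hamVF H z₀ := by
    rw [hφ0]
    abel
  rw [hexpr]
  refine hmain.trans ?_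
  have hτnorm : |τ| ≤ ‖((τ, z) : ℝ × Esp n) - ((0:ℝ), z₀)‖ := by
    have := norm_fst_le (((τ, z) : ℝ × Esp n) - ((0:ℝ), z₀))
    simpa using this
  calc C * |τ| ≤ c * ‖((τ, z) : ℝ × Esp n) - ((0:ℝ), z₀)‖ :=
        mul_le_mul hCc hτnorm (abs_nonneg _) hc.le
    _ = c * ‖((τ, z) : ℝ × Esp n) - ((0:ℝ), z₀)‖ := rfl

end Var


section Dyn

variable {n : ℕ} {H : Esp n → ℝ} {ω : Esp n → ℝ} {φ ψ : ℝ → Esp n → Esp n}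

lemma omega_const_on_orbit
    (hωc : Continuous ω) (hωpos : ∀ z, 0 < ω z)
    (hφ0 : ∀ z, φ 0 z = z)
    (hφadd : ∀ s t z, φ (s + t) z = φ s (φ t z))
    (hcont : ∀ z, Continuous fun r => φ r z)
    (hφper : ∀ t z, φ (t + 2 * π / ω z) z = φ t z)
    (y : Esp n) :
    (∀ t, φ t y = y) ∨ (∀ s, ω (φ s y) = ω y) := by
  classical
  -- the subgroup of periods
  set S : AddSubgroup ℝ :=
    { carrier := {T | ∀ t, φ (t + T) y = φ t y}
      zero_mem' := by intro t; rw [add_zero]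
      add_mem' := by
        intro T T' hT hT' t
        have h1 : t + (T + T') = (t + T') + T := by ring
        rw [h1, hT (t + T')]
        exact hT' t
      neg_mem' := by
        intro T hT t
        have h1 := hT (t + -T)
        have h2 : t + -T + T = t := by ring
        rw [h2] at h1
        exact h1.symm } with hS
  have hSclosed : IsClosed (S : Set ℝ) := by
    have : (S : Set ℝ) = ⋂ t : ℝ, {T | φ (t + T) y = φ t y} := by
      ext T; simp [hS, Set.mem_iInter]
    rw [this]
    exact isClosed_iInter fun t =>
      isClosed_eq ((hcont y).comp (continuous_const.add continuous_id)) continuous_const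
  -- membership of all the periods
  have hmem : ∀ s : ℝ, (2 * π / ω (φ s y)) ∈ S := by
    intro s t
    have h1 := hφper (t - s) (φ s y)
    rw [← hφadd (t - s + 2 * π / ω (φ s y)) s y, ← hφadd (t - s) s y] at h1
    have e1 : t - s + 2 * π / ω (φ s y) + s = t + 2 * π / ω (φ s y) := by ring
    have e2 : t - s + s = t := by ring
    rw [e1, e2] at h1
    exact h1
  rcases S.dense_or_cyclic with hdense | ⟨a, hcyc⟩
  · -- dense: all reals are periods, constant orbit
    left
    have hall : (S : Set ℝ) = Set.univ := by
      have := hdense.closure_eq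
      rw [hSclosed.closure_eq] at this
      exact this
    intro t
    have ht : t ∈ S := by rw [← SetLike.mem_coe, hall]; trivial
    have := ht 0
    rwa [zero_add, hφ0] at this
  · -- cyclic
    right
    have hπ : (0:ℝ) < π := Real.pi_pos
    have hc0pos : 0 < 2 * π / ω y := div_pos (by positivity) (hωpos y)
    have ha0 : a ≠ 0 := by
      intro h0
      have h1 : (2 * π / ω (φ 0 y)) ∈ AddSubgroup.closure ({a} : Set ℝ) := by
        rw [← hcyc]; exact hmem 0
      rw [AddSubgroup.mem_closure_singleton] at h1
      obtain ⟨k, hk⟩ := h1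
      rw [h0] at hk
      simp at hk
      rw [hφ0] at hk
      linarith [hc0pos, hk]
    -- integer-valued continuous function
    set g : ℝ → ℝ := fun s => (2 * π / ω (φ s y)) / a with hg
    have hgc : Continuous g := by
      apply Continuous.div_const
      apply Continuous.div continuous_const (hωc.comp (hcont y))
      exact fun s => (hωpos _).ne'
    have hgint : ∀ s, ∃ m : ℤ, g s = (m : ℝ) := by
      intro s
      have h1 : (2 * π / ω (φ s y)) ∈ AddSubgroup.closure ({a} : Set ℝ) := by
        rw [← hcyc]; exact hmem s
      rw [AddSubgroup.mem_closure_singleton] at h1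
      obtain ⟨k, hk⟩ := h1
      refine ⟨k, ?_⟩
      rw [hg]
      simp only
      rw [← hk, zsmul_eq_mul]
      field_simp
    have hgconst : ∀ s, g s = g 0 := by
      intro s
      by_contra hne
      obtain ⟨m₁, hm₁⟩ := hgint s
      obtain ⟨m₀, hm₀⟩ := hgint 0
      set ρ := (min (g 0) (g s)) + 1/2 with hρ
      have hmne : m₀ ≠ m₁ := by
        intro h; apply hne; rw [hm₁, hm₀, h]
      have hgap : min (g 0) (g s) + 1 ≤ max (g 0) (g s) := by
        rw [hm₀, hm₁]
        rcases lt_or_gt_of_ne hmne with h | h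
        · rw [min_eq_left, max_eq_right] <;> try exact_mod_cast h.le
          have : (m₀ : ℝ) + 1 ≤ m₁ := by exact_mod_cast h
          linarith
        · rw [min_eq_right, max_eq_left] <;> try exact_mod_cast h.le
          have : (m₁ : ℝ) + 1 ≤ m₀ := by exact_mod_cast h
          linarith
      have hρmem : ρ ∈ Set.uIcc (g 0) (g s) := by
        rw [Set.mem_uIcc]
        rcases le_total (g 0) (g s) with h | h
        · left
          constructor
          · rw [hρ, min_eq_left h]; linarith
          · rw [hρ, min_eq_left h]
            have := hgap
            rw [min_eq_left h, max_eq_right h] at this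
            linarith
        · right
          constructor
          · rw [hρ, min_eq_right h]; linarith
          · rw [hρ, min_eq_right h]
            have := hgap
            rw [min_eq_right h, max_eq_left h] at this
            linarith
      have hIVT := intermediate_value_uIcc (a := (0:ℝ)) (b := s) (f := g)
        (hgc.continuousOn)
      obtain ⟨s', _, hs'⟩ := hIVT hρmem
      obtain ⟨m', hm'⟩ := hgint s'
      rw [hm'] at hs'
      -- ρ is a half-integer, contradiction
      have h2 : (2 * m' : ℝ) = 2 * min (g 0) (g s) + 1 := by
        rw [hs', hρ]; ring
      have h3 : min (g 0) (g s) = ((min m₀ m₁ : ℤ) : ℝ) := by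
        rw [hm₀, hm₁]
        rcases le_total ((m₀:ℝ)) ((m₁:ℝ)) with h | h
        · rw [min_eq_left h]
          have : min m₀ m₁ = m₀ := min_eq_left (by exact_mod_cast h)
          rw [this]
        · rw [min_eq_right h]
          have : min m₀ m₁ = m₁ := min_eq_right (by exact_mod_cast h)
          rw [this]
      rw [h3] at h2
      have h4 : (2 * m' : ℤ) = 2 * min m₀ m₁ + 1 := by exact_mod_cast h2
      omega
    -- conclude
    intro s
    have h1 := hgconst s
    rw [hg] at h1
    simp only at h1
    rw [hφ0] at h1
    have h2 : 2 * π / ω (φ s y) = 2 * π / ω y := by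
      have h2' := congrArg (fun r => r * a) h1
      simpa [div_mul_cancel₀, ha0] using h2'
    have hωs := hωpos (φ s y)
    have hωy := hωpos y
    rw [div_eq_div_iff (by positivity) (by positivity)] at h2
    have h2π : (0:ℝ) < 2 * π := by positivity
    nlinarith

lemma fixed_point_vf_zero
    (hφ0 : ∀ z, φ 0 z = z)
    (hφflow : ∀ t z, HasDerivAt (fun τ => φ τ z) (hamVF H (φ t z)) t)
    {y : Esp n} (hfix : ∀ t, φ t y = y) : hamVF H y = 0 := by
  have h1 := hφflow 0 y
  have h2 : (fun τ => φ τ y) = fun _ => y := funext fun τ => hfix τ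
  rw [h2] at h1
  have h3 : HasDerivAt (fun _ : ℝ => y) (0 : Esp n) 0 := hasDerivAt_const _ _
  have := h1.unique h3
  rwa [hfix 0] at this

lemma psi_eq_phi (hH : ContDiff ℝ (⊤ : ℕ∞) H)
    (hω : ContDiff ℝ (⊤ : ℕ∞) ω) (hωpos : ∀ z, 0 < ω z)
    (hφ0 : ∀ z, φ 0 z = z)
    (hφadd : ∀ s t z, φ (s + t) z = φ s (φ t z))
    (hφflow : ∀ t z, HasDerivAt (fun τ => φ τ z) (hamVF H (φ t z)) t)
    (hφper : ∀ t z, φ (t + 2 * π / ω z) z = φ t z)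
    (hψflow : ∀ t z, HasDerivAt (fun τ => ψ τ z)
      ((ω (ψ t z))⁻¹ • hamVF H (ψ t z)) t)
    (hψ0 : ∀ z, ψ 0 z = z) :
    ∀ t, 0 ≤ t → ∀ y, ψ t y = φ (t * (ω y)⁻¹) y := by
  intro t ht y
  have hcont : ∀ z, Continuous fun r => φ r z := fun z =>
    continuous_iff_continuousAt.2 fun τ => (hφflow τ z).continuousAt
  have hψcont : Continuous fun r => ψ r y :=
    continuous_iff_continuousAt.2 fun τ => (hψflow τ y).continuousAt
  -- the vector field Υ
  set Υ : Esp n → Esp n := fun z => (ω z)⁻¹ • hamVF H z with hΥ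
  have hΥc : ContDiff ℝ (⊤ : ℕ∞) Υ :=
    (hω.inv fun z => (hωpos z).ne').smul (contDiff_hamVF hH)
  -- β is also a solution
  have hβflow : ∀ τ, HasDerivAt (fun τ' => φ (τ' * (ω y)⁻¹) y) (Υ (φ (τ * (ω y)⁻¹) y)) τ := by
    intro τ
    have hg := hφflow (τ * (ω y)⁻¹) y
    have hh : HasDerivAt (fun τ' : ℝ => τ' * (ω y)⁻¹) ((ω y)⁻¹) τ := by
      simpa using (hasDerivAt_id τ).mul_const ((ω y)⁻¹)
    have h1 := HasDerivAt.scomp τ hg hh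
    rcases omega_const_on_orbit hω.continuous hωpos hφ0 hφadd hcont hφper y with hfix | hconst
    · -- constant orbit
      have hF0 : hamVF H y = 0 := fixed_point_vf_zero hφ0 hφflow hfix
      have h2 : (fun τ' : ℝ => φ (τ' * (ω y)⁻¹) y) = fun _ => y := funext fun τ' => hfix _
      rw [h2]
      have h3 : Υ (φ (τ * (ω y)⁻¹) y) = 0 := by
        rw [hfix, hΥ]
        simp [hF0]
      rw [h3]
      exact hasDerivAt_const τ y
    · rw [hΥ]
      simp only [hconst]
      simpa [Function.comp_def] using h1
  -- uniqueness
  have h0eq : ψ 0 y = φ (0 * (ω y)⁻¹) y := by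
    rw [hψ0, zero_mul, hφ0]
  rcases eq_or_lt_of_le ht with rfl | htpos
  · exact h0eq
  -- compact set containing both trajectories
  have hS : IsCompact ((fun τ => ψ τ y) '' Icc 0 t ∪ (fun τ => φ (τ * (ω y)⁻¹) y) '' Icc 0 t) :=
    (isCompact_Icc.image hψcont).union
      (isCompact_Icc.image ((hcont y).comp (continuous_id.mul continuous_const)))
  obtain ⟨R, α, hα1, hR1, hKB, hLip, hdFb⟩ := exists_constants hΥc hS
  have huniq := ODE_solution_unique_of_mem_Icc_right
    (v := fun _ z => Υ z) (s := fun _ => closedBall (0 : Esp n) R) (K := α.toNNReal)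
    (hv := fun _ _ => hLip)
    (f := fun τ => ψ τ y) (g := fun τ => φ (τ * (ω y)⁻¹) y) (a := 0) (b := t)
    (hψcont.continuousOn)
    (fun τ _ => (hψflow τ y).hasDerivWithinAt)
    (fun τ hτ => by
      have h1 : ψ τ y ∈ closedBall (0 : Esp n) (R - 1) :=
        hKB _ (Set.mem_union_left _ ⟨τ, ⟨hτ.1, hτ.2.le⟩, rfl⟩)
      rw [mem_closedBall] at h1 ⊢
      linarith)
    (((hcont y).comp (continuous_id.mul continuous_const)).continuousOn)
    (fun τ _ => (hβflow τ).hasDerivWithinAt)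
    (fun τ hτ => by
      have h1 : φ (τ * (ω y)⁻¹) y ∈ closedBall (0 : Esp n) (R - 1) :=
        hKB _ (Set.mem_union_right _ ⟨τ, ⟨hτ.1, hτ.2.le⟩, rfl⟩)
      rw [mem_closedBall] at h1 ⊢
      linarith)
    h0eq
  exact huniq ⟨ht, le_refl _⟩

end Dyn

section Main

variable {n : ℕ} {H : Esp n → ℝ} {ω : Esp n → ℝ} {φ ψ : ℝ → Esp n → Esp n}

set_option maxHeartbeats 1000000 in
lemma main_formula (hH : ContDiff ℝ (⊤ : ℕ∞) H)
    (hω : ContDiff ℝ (⊤ : ℕ∞) ω) (hωpos : ∀ z, 0 < ω z)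
    (hφ0 : ∀ z, φ 0 z = z)
    (hφadd : ∀ s t z, φ (s + t) z = φ s (φ t z))
    (hφflow : ∀ t z, HasDerivAt (fun τ => φ τ z) (hamVF H (φ t z)) t)
    (hφper : ∀ t z, φ (t + 2 * π / ω z) z = φ t z)
    (hψ0 : ∀ z, ψ 0 z = z)
    (hψflow : ∀ t z, HasDerivAt (fun τ => ψ τ z)
      ((ω (ψ t z))⁻¹ • hamVF H (ψ t z)) t)
    (x : Esp n) (t : ℝ) (ht : 0 ≤ t) :
    ∃ D : Esp n →L[ℝ] Esp n, HasFDerivAt (ψ t) D x ∧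
      ∀ u v, omega0 (D u) (D v) = omega0 u v +
        t * ((fderiv ℝ (fun z => (ω z)⁻¹) x u) * omega0 (hamVF H x) v
          + (fderiv ℝ (fun z => (ω z)⁻¹) x v) * omega0 u (hamVF H x)) := by
  set g : Esp n → ℝ := fun z => (ω z)⁻¹ with hgdef
  have hgc : ContDiff ℝ (⊤ : ℕ∞) g := hω.inv fun z => (hωpos z).ne'
  have hgdiff : DifferentiableAt ℝ g x := (hgc.differentiable (by simp) x)
  set dg : Esp n →L[ℝ] ℝ := fderiv ℝ g x with hdg
  have hgpos : 0 < g x := by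
    rw [hgdef]
    simp only
    exact inv_pos.2 (hωpos x)
  set P := 2 * π / ω x with hPdef
  have hP : 0 < P := div_pos (by positivity) (hωpos x)
  have hperx : ∀ τ, φ (τ + P) x = φ τ x := fun τ => hφper τ x
  have hxK : x ∈ orbK φ x P := x_mem_orbK hP hφ0
  set s₀ := t * g x with hs₀def
  have hs₀ : 0 ≤ s₀ := mul_nonneg ht hgpos.le
  obtain ⟨M, hM, hMsymp⟩ := good_all hH hφ0 hφadd hφflow hP hperx s₀ hs₀ x hxK
  have hKinv := orbK_inv hP hφadd hperx
  have hz₀K : φ s₀ x ∈ orbK φ x P := hKinv x hxK s₀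
  have hΦ := joint_diff hH hφ0 hφadd hφflow hP hperx hz₀K
  -- inner map
  have hinner1 : HasFDerivAt (fun y => t * g y - s₀) (t • dg) x := by
    have h1 : HasFDerivAt g dg x := hgdiff.hasFDerivAt
    have h2 := h1.const_mul t
    exact h2.sub_const s₀
  have hinner : HasFDerivAt (fun y => ((t * g y - s₀, φ s₀ y) : ℝ × Esp n))
      ((t • dg).prod M) x := hinner1.prodMk hM
  have hGx : ((t * g x - s₀, φ s₀ x) : ℝ × Esp n) = ((0:ℝ), φ s₀ x) := by
    rw [hs₀def]
    simp
  have hΦ' : HasFDerivAt (fun p : ℝ × Esp n => φ p.1 p.2)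
      ((ContinuousLinearMap.fst ℝ ℝ (Esp n)).smulRight (hamVF H (φ s₀ x))
        + ContinuousLinearMap.snd ℝ ℝ (Esp n)) ((t * g x - s₀, φ s₀ x) : ℝ × Esp n) := by
    rw [hGx]
    exact hΦ
  have hcomp := hΦ'.comp x hinner
  have hfun : ((fun p : ℝ × Esp n => φ p.1 p.2) ∘ (fun y => ((t * g y - s₀, φ s₀ y) : ℝ × Esp n)))
      = ψ t := by
    funext y
    show φ (t * g y - s₀) (φ s₀ y) = ψ t y
    rw [← hφadd (t * g y - s₀) s₀ y]
    have he : t * g y - s₀ + s₀ = t * g y := by ring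
    rw [he]
    exact (psi_eq_phi hH hω hωpos hφ0 hφadd hφflow hφper hψflow hψ0 t ht y).symm
  rw [hfun] at hcomp
  refine ⟨_, hcomp, ?_⟩
  intro u v
  -- compute the derivative application
  have happ : ∀ w : Esp n,
      (((ContinuousLinearMap.fst ℝ ℝ (Esp n)).smulRight (hamVF H (φ s₀ x))
        + ContinuousLinearMap.snd ℝ ℝ (Esp n)).comp ((t • dg).prod M)) w
      = (t * dg w) • hamVF H (φ s₀ x) + M w := by
    intro w
    simp [ContinuousLinearMap.smulRight_apply, smul_smul]
  have hequiv : M (hamVF H x) = hamVF H (φ s₀ x) :=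
    equivariance hφ0 hφadd hφflow hM
  rw [happ u, happ v]
  rw [omega0_add_left, omega0_add_right, omega0_add_right]
  rw [omega0_smul_left, omega0_smul_left, omega0_smul_right, omega0_smul_right]
  rw [← hequiv]
  rw [omega0_self, hMsymp u v]
  have h1 : omega0 (M (hamVF H x)) (M v) = omega0 (hamVF H x) v := hMsymp _ _
  have h2 : omega0 (M u) (M (hamVF H x)) = omega0 u (hamVF H x) := hMsymp _ _
  rw [h1, h2]
  rw [hdg, hgdef]
  ring

end Main

end SympAux

/-- Each map `ψ_t` of the flow of the generator `Υ = (1/ω) X_H` of the S¹-action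
preserves the canonical symplectic form. -/
theorem S1_action_preserves_symplectic_form
    {n : ℕ} (H : ((Fin n → ℝ) × (Fin n → ℝ)) → ℝ) (hH : ContDiff ℝ (⊤ : ℕ∞) H)
    (ω : ((Fin n → ℝ) × (Fin n → ℝ)) → ℝ) (hω : ContDiff ℝ (⊤ : ℕ∞) ω)
    (hωpos : ∀ x, 0 < ω x)
    (φ ψ : ℝ → ((Fin n → ℝ) × (Fin n → ℝ)) → ((Fin n → ℝ) × (Fin n → ℝ)))
    (hφ0 : ∀ x, φ 0 x = x) (hφadd : ∀ s t : ℝ, ∀ x, φ (s + t) x = φ s (φ t x))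
    (hφflow : ∀ t : ℝ, ∀ x, HasDerivAt (fun τ : ℝ => φ τ x) (hamVF H (φ t x)) t)
    (hφper : ∀ t : ℝ, ∀ x, φ (t + 2 * π / ω x) x = φ t x)
    (hψ0 : ∀ x, ψ 0 x = x) (hψadd : ∀ s t : ℝ, ∀ x, ψ (s + t) x = ψ s (ψ t x))
    (hψflow : ∀ t : ℝ, ∀ x, HasDerivAt (fun τ : ℝ => ψ τ x)
      ((ω (ψ t x))⁻¹ • hamVF H (ψ t x)) t)
    (hψper : ∀ t : ℝ, ∀ x, ψ (t + 2 * π) x = ψ t x) :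
    ∀ t : ℝ, ∀ x u v : (Fin n → ℝ) × (Fin n → ℝ),
      omega0 (fderiv ℝ (ψ t) x u) (fderiv ℝ (ψ t) x v) = omega0 u v := by
  intro t x u v
  have hπ2 : (0:ℝ) < 2 * π := by positivity
  -- the 2π instance kills the defect term
  obtain ⟨D₂, hD₂, hform₂⟩ := SympAux.main_formula hH hω hωpos hφ0 hφadd hφflow hφper
    hψ0 hψflow x (2 * π) hπ2.le
  have hψ2π : ψ (2 * π) = id := by
    funext y
    have h1 := hψper 0 y
    rw [zero_add] at h1
    rw [h1, hψ0]
    rfl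
  have hD₂id : D₂ = ContinuousLinearMap.id ℝ ((Fin n → ℝ) × (Fin n → ℝ)) := by
    have h1 : HasFDerivAt (id : ((Fin n → ℝ) × (Fin n → ℝ)) → _) D₂ x := by
      rw [← hψ2π]; exact hD₂
    exact h1.unique (hasFDerivAt_id x)
  have hΔ : ∀ u' v' : (Fin n → ℝ) × (Fin n → ℝ),
      (fderiv ℝ (fun z => (ω z)⁻¹) x u') * omega0 (hamVF H x) v'
        + (fderiv ℝ (fun z => (ω z)⁻¹) x v') * omega0 u' (hamVF H x) = 0 := by
    intro u' v'
    have h2 := hform₂ u' v'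
    rw [hD₂id] at h2
    simp only [ContinuousLinearMap.coe_id', id_eq] at h2
    have h3 : 2 * π * ((fderiv ℝ (fun z => (ω z)⁻¹) x u') * omega0 (hamVF H x) v'
        + (fderiv ℝ (fun z => (ω z)⁻¹) x v') * omega0 u' (hamVF H x)) = 0 := by
      linarith
    rcases mul_eq_zero.1 h3 with h4 | h4
    · exact absurd h4 hπ2.ne'
    · exact h4
  -- reduce t modulo 2π
  have hψperiodic : ∀ y, Function.Periodic (fun s => ψ s y) (2 * π) := fun y s => hψper s y
  have hteq : ψ t = ψ (t - (⌊t / (2 * π)⌋ : ℤ) * (2 * π)) := by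
    funext y
    exact ((hψperiodic y).sub_int_mul_eq ⌊t / (2 * π)⌋).symm
  have ht₀0 : 0 ≤ t - (⌊t / (2 * π)⌋ : ℤ) * (2 * π) :=
    Int.sub_floor_div_mul_nonneg t hπ2
  rw [hteq]
  obtain ⟨D, hD, hform⟩ := SympAux.main_formula hH hω hωpos hφ0 hφadd hφflow hφper
    hψ0 hψflow x (t - (⌊t / (2 * π)⌋ : ℤ) * (2 * π)) ht₀0
  rw [hD.fderiv]
  rw [hform u v, hΔ u v, mul_zero, add_zero]
end
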